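/- arXiv:2104.09881 — 6 statements merged into one kernel-verified Lean document; each statement's English description precedes it below -/
import Mathlib

section
/- Uniqueness in the negative case with nonpositive h: Let h : V → ℝ with h(x) ≤ 0 for all x ∈ V, h not identically zero, and let c < 0. Then the equation −Δu(x) = h(x)e^{u(x)} − c for all x ∈ V has exactly one solution u : V → ℝ, and this solution is the strict global minimum of J_{h,c}, i.e. J_{h,c}(v) > J_{h,c}(u) for every v : V → ℝ with v ≠ u. -/
/-!
Writing `r = -Δu - (h eᵘ - c)` for the residual, summation by parts gives the exact expansion
`J(u + w) = J(u) + ¼ Σ ω (w y - w x)² + ∫ w r dμ + ∫ (-h) eᵘ (eʷ - 1 - w) dμ`.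
At a solution `r = 0` and the two remaining terms are nonnegative; they vanish only if `w` is
constant (connectivity) and `w = 0` where `h < 0`, so every solution is the strict global minimum
of `J`, and two solutions would each lie strictly below the other. A solution exists because
`J` is continuous and coercive: a Poincaré inequality along paths controls the oscillation of `u`
by the energy, and at a vertex where `h < 0` the term `-h eᵘ` beats the linear term `c u`.
-/

open Finset Real

/-- The graph Laplacian: `Δu(x) = (1/μ x) * Σ_y ω x y * (u y - u x)`. -/
noncomputable def graphLap {V : Type*} [Fintype V] (ω : V → V → ℝ) (μ : V → ℝ)
    (u : V → ℝ) (x : V) : ℝ :=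
  (1 / μ x) * ∑ y, ω x y * (u y - u x)

/-- The integral of `f` over `V` with respect to the vertex measure `μ`. -/
noncomputable def graphInt {V : Type*} [Fintype V] (μ : V → ℝ) (f : V → ℝ) : ℝ :=
  ∑ x, f x * μ x

/-- Connectivity: any two distinct vertices are joined by a chain of positively
weighted edges. -/
def graphConn {V : Type*} (ω : V → V → ℝ) : Prop :=
  ∀ x y : V, x ≠ y → ∃ (m : ℕ) (p : ℕ → V), p 0 = x ∧ p m = y ∧
    ∀ i < m, 0 < ω (p i) (p (i + 1))

/-- The gradient form `Γ(u,v)(x)`. -/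
noncomputable def graphGamma {V : Type*} [Fintype V] (ω : V → V → ℝ) (μ : V → ℝ)
    (u v : V → ℝ) (x : V) : ℝ :=
  (1 / (2 * μ x)) * ∑ y, ω x y * (u y - u x) * (v y - v x)

/-- The length of the gradient: `|∇u|(x) = √(Γ(u,u)(x))`. -/
noncomputable def graphGradNorm {V : Type*} [Fintype V] (ω : V → V → ℝ) (μ : V → ℝ)
    (u : V → ℝ) (x : V) : ℝ :=
  Real.sqrt (graphGamma ω μ u u x)

/-- The functional `J_{h,f}(u) = ∫_V (½|∇u|² + f·u − h·e^u) dμ`. -/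
noncomputable def Jfunc {V : Type*} [Fintype V] (ω : V → V → ℝ) (μ : V → ℝ)
    (h f : V → ℝ) (u : V → ℝ) : ℝ :=
  graphInt μ (fun x => (1 / 2) * (graphGradNorm ω μ u x) ^ 2 + f x * u x - h x * Real.exp (u x))

open Filter

noncomputable def graphEnergy {V : Type*} [Fintype V] (ω : V → V → ℝ) (u : V → ℝ) : ℝ :=
  ∑ x, ∑ y, ω x y * (u y - u x) ^ 2

theorem graphConn.apply_eq_apply {V α : Type*} {ω : V → V → ℝ} (hconn : graphConn ω) {w : V → α}
    (hw : ∀ x y, 0 < ω x y → w x = w y) (x y : V) : w x = w y := by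
  rcases eq_or_ne x y with rfl | hxy
  · rfl
  obtain ⟨m, p, rfl, rfl, hp⟩ := hconn x y hxy
  suffices ∀ i ≤ m, w (p 0) = w (p i) from this m le_rfl
  intro i hi
  induction i with
  | zero => rfl
  | succ i ih => exact (ih (by omega)).trans (hw _ _ (hp i (by omega)))

section
variable {V : Type*} [Fintype V] {ω : V → V → ℝ} {μ : V → ℝ}

theorem graphInt_nonneg (hμ : ∀ x, 0 ≤ μ x) {g : V → ℝ} (hg : ∀ x, 0 ≤ g x) :
    0 ≤ graphInt μ g :=
  sum_nonneg fun x _ => mul_nonneg (hg x) (hμ x)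

theorem graphEnergy_nonneg (hω : ∀ x y, 0 ≤ ω x y) (u : V → ℝ) : 0 ≤ graphEnergy ω u :=
  sum_nonneg fun x _ => sum_nonneg fun y _ => mul_nonneg (hω x y) (sq_nonneg _)

theorem mul_sq_sub_le_graphEnergy (hω : ∀ x y, 0 ≤ ω x y) (u : V → ℝ) (x y : V) :
    ω x y * (u y - u x) ^ 2 ≤ graphEnergy ω u :=
  (single_le_sum (f := fun y => ω x y * (u y - u x) ^ 2)
      (fun z _ => mul_nonneg (hω x z) (sq_nonneg _)) (mem_univ y)).trans
    (single_le_sum (f := fun x => ∑ y, ω x y * (u y - u x) ^ 2)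
      (fun z _ => sum_nonneg fun _ _ => mul_nonneg (hω z _) (sq_nonneg _)) (mem_univ x))

theorem graphEnergy_smul (s : ℝ) (u : V → ℝ) :
    graphEnergy ω (s • u) = s ^ 2 * graphEnergy ω u := by
  simp only [graphEnergy, mul_sum, Pi.smul_apply, smul_eq_mul]
  exact sum_congr rfl fun x _ => sum_congr rfl fun y _ => by ring

theorem mul_graphLap (hμ : ∀ x, μ x ≠ 0) (u : V → ℝ) (x : V) :
    graphLap ω μ u x * μ x = ∑ y, ω x y * (u y - u x) := by
  rw [graphLap]
  field_simp [hμ x]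

theorem graph_green (hsymm : ∀ x y, ω x y = ω y x) (hμ : ∀ x, μ x ≠ 0) (u w : V → ℝ) :
    ∑ x, ∑ y, ω x y * (u y - u x) * (w y - w x) =
      -2 * graphInt μ (fun x => w x * graphLap ω μ u x) := by
  have swap : ∑ x, ∑ y, ω x y * (u y - u x) * w y = -∑ x, ∑ y, ω x y * (u y - u x) * w x := by
    rw [sum_comm, ← sum_neg_distrib]
    refine sum_congr rfl fun x _ => ?_
    rw [← sum_neg_distrib]
    exact sum_congr rfl fun y _ => by rw [hsymm]; ring
  have rhs : graphInt μ (fun x => w x * graphLap ω μ u x) = ∑ x, ∑ y, ω x y * (u y - u x) * w x := by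
    simp only [graphInt, mul_assoc, mul_graphLap hμ, mul_sum]
    exact sum_congr rfl fun x _ => sum_congr rfl fun y _ => by ring
  calc ∑ x, ∑ y, ω x y * (u y - u x) * (w y - w x)
      = ∑ x, ∑ y, ω x y * (u y - u x) * w y - ∑ x, ∑ y, ω x y * (u y - u x) * w x := by
        simp only [← sum_sub_distrib, mul_sub]
    _ = _ := by rw [swap, rhs]; ring

theorem graphEnergy_add (hsymm : ∀ x y, ω x y = ω y x) (hμ : ∀ x, μ x ≠ 0) (u w : V → ℝ) :
    graphEnergy ω (u + w) =
      graphEnergy ω u - 4 * graphInt μ (fun x => w x * graphLap ω μ u x) + graphEnergy ω w := by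
  have expand : graphEnergy ω (u + w) = graphEnergy ω u +
      2 * ∑ x, ∑ y, ω x y * (u y - u x) * (w y - w x) + graphEnergy ω w := by
    simp only [graphEnergy, mul_sum, ← sum_add_distrib, Pi.add_apply]
    exact sum_congr rfl fun x _ => sum_congr rfl fun y _ => by ring
  rw [expand, graph_green hsymm hμ]
  ring

theorem sq_graphGradNorm (hω : ∀ x y, 0 ≤ ω x y) (hμ : ∀ x, 0 < μ x) (u : V → ℝ) (x : V) :
    graphGradNorm ω μ u x ^ 2 = graphGamma ω μ u u x := by
  refine sq_sqrt (mul_nonneg (by have := hμ x; positivity) (sum_nonneg fun y _ => ?_))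
  rw [mul_assoc]
  exact mul_nonneg (hω x y) (mul_self_nonneg _)

theorem Jfunc_eq (hω : ∀ x y, 0 ≤ ω x y) (hμ : ∀ x, 0 < μ x) (h f u : V → ℝ) :
    Jfunc ω μ h f u =
      graphEnergy ω u / 4 + graphInt μ (fun x => f x * u x - h x * exp (u x)) := by
  simp only [Jfunc, graphInt, graphEnergy, sq_graphGradNorm hω hμ, graphGamma, sum_div,
    ← sum_add_distrib]
  refine sum_congr rfl fun x _ => ?_
  have := (hμ x).ne'
  simp only [← sum_div, mul_assoc, ← sq]
  field_simp
  ring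

theorem Jfunc_add (hsymm : ∀ x y, ω x y = ω y x) (hω : ∀ x y, 0 ≤ ω x y)
    (hμ : ∀ x, 0 < μ x) (h f u w : V → ℝ) :
    Jfunc ω μ h f (u + w) = Jfunc ω μ h f u + graphEnergy ω w / 4 +
      graphInt μ (fun x => w x * (-graphLap ω μ u x - (h x * exp (u x) - f x))) +
      graphInt μ (fun x => -h x * exp (u x) * (exp (w x) - 1 - w x)) := by
  simp only [Jfunc_eq hω hμ, graphEnergy_add hsymm (fun x => (hμ x).ne'), graphInt]
  have pointwise : ∀ x, (f x * (u + w) x - h x * exp ((u + w) x)) * μ x =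
      (f x * u x - h x * exp (u x)) * μ x + w x * graphLap ω μ u x * μ x +
      w x * (-graphLap ω μ u x - (h x * exp (u x) - f x)) * μ x +
      -h x * exp (u x) * (exp (w x) - 1 - w x) * μ x := fun x => by
    rw [Pi.add_apply, exp_add]; ring
  simp only [pointwise, sum_add_distrib, mul_assoc]
  ring

theorem graphConn.apply_eq_apply_of_graphEnergy_eq_zero (hconn : graphConn ω)
    (hω : ∀ x y, 0 ≤ ω x y) {w : V → ℝ} (hw : graphEnergy ω w = 0) (x y : V) : w x = w y := by
  refine hconn.apply_eq_apply (fun x y hxy => ?_) x y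
  have hedge : ω x y * (w y - w x) ^ 2 = 0 :=
    le_antisymm (hw ▸ mul_sq_sub_le_graphEnergy hω w x y) (mul_nonneg (hω x y) (sq_nonneg _))
  have := pow_eq_zero_iff two_ne_zero |>.1 ((mul_eq_zero.1 hedge).resolve_left hxy.ne')
  linarith

theorem graphConn.exists_abs_sub_le (hconn : graphConn ω) (hω : ∀ x y, 0 ≤ ω x y) (x y : V) :
    ∃ C, 0 ≤ C ∧ ∀ u : V → ℝ, |u y - u x| ≤ C * √(graphEnergy ω u) := by
  rcases eq_or_ne x y with rfl | hxy
  · exact ⟨0, le_rfl, fun u => by simp⟩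
  obtain ⟨m, p, rfl, rfl, hp⟩ := hconn x y hxy
  refine ⟨∑ i ∈ range m, (√(ω (p i) (p (i + 1))))⁻¹, sum_nonneg fun _ _ => by positivity,
    fun u => ?_⟩
  have edge : ∀ i < m,
      |u (p (i + 1)) - u (p i)| ≤ (√(ω (p i) (p (i + 1))))⁻¹ * √(graphEnergy ω u) := by
    intro i hi
    rw [inv_mul_eq_div, le_div_iff₀ (sqrt_pos.2 (hp i hi)), ← sqrt_sq_eq_abs,
      ← sqrt_mul (sq_nonneg _), mul_comm]
    exact sqrt_le_sqrt (mul_sq_sub_le_graphEnergy hω u _ _)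
  calc |u (p m) - u (p 0)| = |∑ i ∈ range m, (u (p (i + 1)) - u (p i))| := by
        rw [sum_range_sub (fun i => u (p i))]
    _ ≤ ∑ i ∈ range m, |u (p (i + 1)) - u (p i)| := abs_sum_le_sum_abs _ _
    _ ≤ ∑ i ∈ range m, (√(ω (p i) (p (i + 1))))⁻¹ * √(graphEnergy ω u) :=
        sum_le_sum fun i hi => edge i (mem_range.1 hi)
    _ = _ := (sum_mul ..).symm

theorem graphConn.exists_forall_abs_sub_le (hconn : graphConn ω) (hω : ∀ x y, 0 ≤ ω x y) :
    ∃ C, 0 ≤ C ∧ ∀ (u : V → ℝ) (x y : V), |u y - u x| ≤ C * √(graphEnergy ω u) := by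
  choose C hC0 hC using hconn.exists_abs_sub_le hω
  refine ⟨∑ q : V × V, C q.1 q.2, sum_nonneg fun q _ => hC0 q.1 q.2, fun u x y => ?_⟩
  refine (hC x y u).trans (mul_le_mul_of_nonneg_right ?_ (sqrt_nonneg _))
  exact single_le_sum (f := fun q : V × V => C q.1 q.2) (fun q _ => hC0 q.1 q.2) (mem_univ (x, y))

theorem Jfunc_lt_of_solution (hsymm : ∀ x y, ω x y = ω y x) (hω : ∀ x y, 0 ≤ ω x y)
    (hconn : graphConn ω) (hμ : ∀ x, 0 < μ x) {h : V → ℝ} (hle : ∀ x, h x ≤ 0) {x₀ : V}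
    (hx₀ : h x₀ ≠ 0) {f u : V → ℝ} (hu : ∀ x, -graphLap ω μ u x = h x * exp (u x) - f x)
    {v : V → ℝ} (hvu : v ≠ u) : Jfunc ω μ h f u < Jfunc ω μ h f v := by
  obtain ⟨w, rfl⟩ : ∃ w, v = u + w := ⟨v - u, by abel⟩
  have hgap : ∀ x, 0 ≤ -h x * exp (u x) * (exp (w x) - 1 - w x) := fun x =>
    mul_nonneg (mul_nonneg (neg_nonneg.2 (hle x)) (exp_pos _).le)
      (by linarith [add_one_le_exp (w x)])
  have hE := graphEnergy_nonneg hω w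
  have hI := graphInt_nonneg (fun x => (hμ x).le) hgap
  have hzero : graphInt μ (fun _ => 0) = 0 := by simp [graphInt]
  rw [Jfunc_add hsymm hω hμ]
  simp only [hu, sub_self, mul_zero, hzero]
  rcases eq_or_ne (w x₀) 0 with hw₀ | hw₀
  · obtain ⟨y, hy⟩ : ∃ y, w y ≠ w x₀ := by
      by_contra! hconst
      exact hvu (add_eq_left.2 (funext fun y => (hconst y).trans hw₀))
    have : graphEnergy ω w ≠ 0 := fun h0 =>
      hy (hconn.apply_eq_apply_of_graphEnergy_eq_zero hω h0 y x₀)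
    have := lt_of_le_of_ne hE this.symm
    linarith
  · have hpos : 0 < graphInt μ (fun x => -h x * exp (u x) * (exp (w x) - 1 - w x)) := by
      refine sum_pos' (fun x _ => mul_nonneg (hgap x) (hμ x).le) ⟨x₀, mem_univ _, ?_⟩
      refine mul_pos (mul_pos (mul_pos (neg_pos.2 ((hle x₀).lt_of_ne hx₀)) (exp_pos _)) ?_) (hμ x₀)
      linarith [add_one_lt_exp hw₀]
    linarith

theorem solution_of_forall_Jfunc_le (hsymm : ∀ x y, ω x y = ω y x) (hω : ∀ x y, 0 ≤ ω x y)
    (hμ : ∀ x, 0 < μ x) {h f u : V → ℝ} (hmin : ∀ v, Jfunc ω μ h f u ≤ Jfunc ω μ h f v)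
    (x : V) : -graphLap ω μ u x = h x * exp (u x) - f x := by
  -- Along the residual `r`, the first variation of `J` is `∫ r² dμ`, which vanishes at a minimum.
  set r : V → ℝ := fun x => -graphLap ω μ u x - (h x * exp (u x) - f x)
  set φ : ℝ → ℝ := fun s => graphEnergy ω r / 4 * s ^ 2 + s * graphInt μ (fun x => r x ^ 2) +
    graphInt μ (fun x => -h x * exp (u x) * (exp (s * r x) - 1 - s * r x))
  have hφ : ∀ s, Jfunc ω μ h f (u + s • r) = Jfunc ω μ h f u + φ s := fun s => by
    have hres : ∀ i, s * r i * (-graphLap ω μ u i - (h i * exp (u i) - f i)) * μ i =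
        s * (r i ^ 2 * μ i) := fun i => by simp only [r]; ring
    simp only [Jfunc_add hsymm hω hμ, graphEnergy_smul, graphInt, φ, Pi.smul_apply, smul_eq_mul,
      mul_sum, hres]
    ring
  have hlocal : IsLocalMin φ 0 := Eventually.of_forall fun s => by
    have hφ₀ : φ 0 = 0 := by simp [φ, graphInt]
    linarith [hφ s, hmin (u + s • r)]
  have hderiv : HasDerivAt φ (graphInt μ (fun x => r x ^ 2)) 0 := by
    have hgap : ∀ x, HasDerivAt (fun s => -h x * exp (u x) * (exp (s * r x) - 1 - s * r x) * μ x)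
        0 0 := fun x => by
      have := ((((hasDerivAt_mul_const (x := (0 : ℝ)) (r x)).exp.sub_const 1).sub
        (hasDerivAt_mul_const (r x))).const_mul (-h x * exp (u x))).mul_const (μ x)
      simpa using this
    have := (((hasDerivAt_pow 2 (0 : ℝ)).const_mul (graphEnergy ω r / 4)).fun_add
      ((hasDerivAt_id' (0 : ℝ)).mul_const (graphInt μ (fun x => r x ^ 2)))).fun_add
      (HasDerivAt.fun_sum (u := univ) fun x _ => hgap x)
    exact this.congr_deriv (by simp)
  have hr : ∀ y, r y ^ 2 * μ y = 0 := fun y =>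
    (sum_eq_zero_iff_of_nonneg fun z _ => mul_nonneg (sq_nonneg (r z)) (hμ z).le).1
      (hlocal.hasDerivAt_eq_zero hderiv) y (mem_univ y)
  have := pow_eq_zero_iff two_ne_zero |>.1 ((mul_eq_zero.1 (hr x)).resolve_right (hμ x).ne')
  linarith

theorem continuous_Jfunc (h f : V → ℝ) : Continuous (Jfunc ω μ h f) := by
  unfold Jfunc graphInt graphGradNorm graphGamma
  fun_prop

theorem mul_abs_le_mul_exp_sub {a : ℝ} (ha : 0 < a) (m t : ℝ) :
    m * |t| ≤ a * exp t - m * t + 2 * m ^ 2 / a := by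
  rcases le_total t 0 with ht | ht
  · have : 0 ≤ 2 * m ^ 2 / a := by positivity
    rw [abs_of_nonpos ht]
    nlinarith [exp_pos t]
  · rw [abs_of_nonneg ht, ← sub_nonneg]
    have hexp := mul_le_mul_of_nonneg_left (quadratic_le_exp_of_nonneg ht) ha.le
    have : 0 ≤ a / 2 * (t - 2 * m / a) ^ 2 := by positivity
    have key : a / 2 * (t - 2 * m / a) ^ 2 = a * (t ^ 2 / 2) - 2 * m * t + 2 * m ^ 2 / a := by
      field_simp
      ring
    nlinarith

theorem norm_le_mul_Jfunc_add (hω : ∀ x y, 0 ≤ ω x y) (hconn : graphConn ω)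
    (hμ : ∀ x, 0 < μ x) {h : V → ℝ} (hle : ∀ x, h x ≤ 0) {x₀ : V} (hx₀ : h x₀ ≠ 0) {c : ℝ}
    (hc : c < 0) : ∃ K > 0, ∃ β, ∀ u, ‖u‖ ≤ K * Jfunc ω μ h (fun _ => c) u + β := by
  obtain ⟨C, hC0, hC⟩ := hconn.exists_forall_abs_sub_le hω
  set m := -c * ∑ x, μ x
  set a := -h x₀ * μ x₀
  have hm : 0 < m := mul_pos (neg_pos.2 hc) (sum_pos (fun x _ => hμ x) ⟨x₀, mem_univ _⟩)
  have ha : 0 < a := mul_pos (neg_pos.2 ((hle x₀).lt_of_ne hx₀)) (hμ x₀)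
  set β := (m * C + 1) ^ 2 + 2 * m ^ 2 / a with hβ
  refine ⟨C + 1 / m, by positivity, (C + 1 / m) * β, fun u => ?_⟩
  set q := √(graphEnergy ω u)
  set t := u x₀
  have hq : 0 ≤ q := sqrt_nonneg _
  have hnorm : ‖u‖ ≤ |t| + C * q := (pi_norm_le_iff_of_nonneg (by positivity)).2 fun y => by
    rw [norm_eq_abs]
    linarith [abs_sub_abs_le_abs_sub (u y) t, hC u x₀ y]
  have hlin : -m * (t + C * q) ≤ ∑ y, c * u y * μ y :=
    calc -m * (t + C * q) = ∑ y, c * (t + C * q) * μ y := by simp only [m, ← mul_sum]; ring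
      _ ≤ _ := sum_le_sum fun y _ => by
        have : u y ≤ t + C * q := by linarith [le_abs_self (u y - t), hC u x₀ y]
        nlinarith [mul_nonneg (mul_nonneg (sub_nonneg.2 this) (neg_nonneg.2 hc.le)) (hμ y).le]
  have hexp : a * exp t ≤ ∑ y, -h y * exp (u y) * μ y := by
    have := single_le_sum (f := fun y => -h y * exp (u y) * μ y)
      (fun y _ => mul_nonneg (mul_nonneg (neg_nonneg.2 (hle y)) (exp_pos _).le) (hμ y).le)
      (mem_univ x₀)
    simpa only [a, mul_right_comm] using this
  have hJ : Jfunc ω μ h (fun _ => c) u =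
      q ^ 2 / 4 + ∑ y, c * u y * μ y + ∑ y, -h y * exp (u y) * μ y := by
    rw [Jfunc_eq hω hμ, sq_sqrt (graphEnergy_nonneg hω u), graphInt, add_assoc, ← sum_add_distrib]
    exact congrArg _ (sum_congr rfl fun y _ => by ring)
  have hquad : q - (m * C + 1) ^ 2 ≤ q ^ 2 / 4 - m * C * q := by
    nlinarith [sq_nonneg (q / 2 - (m * C + 1))]
  have hbound : q + m * |t| ≤ Jfunc ω μ h (fun _ => c) u + β := by
    linarith [mul_abs_le_mul_exp_sub ha m t]
  calc ‖u‖ ≤ |t| + C * q := hnorm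
    _ ≤ (C + 1 / m) * (q + m * |t|) := by
      have : (C + 1 / m) * (q + m * |t|) = |t| + C * q + q / m + C * m * |t| := by
        field_simp
        ring
      have : 0 ≤ q / m + C * m * |t| := by positivity
      linarith
    _ ≤ _ := by rw [← mul_add]; exact mul_le_mul_of_nonneg_left hbound (by positivity)

theorem exists_forall_Jfunc_le (hω : ∀ x y, 0 ≤ ω x y) (hconn : graphConn ω)
    (hμ : ∀ x, 0 < μ x) {h : V → ℝ} (hle : ∀ x, h x ≤ 0) {x₀ : V} (hx₀ : h x₀ ≠ 0) {c : ℝ}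
    (hc : c < 0) : ∃ u, ∀ v, Jfunc ω μ h (fun _ => c) u ≤ Jfunc ω μ h (fun _ => c) v := by
  obtain ⟨K, hK, β, hβ⟩ := norm_le_mul_Jfunc_add hω hconn hμ hle hx₀ hc
  refine (continuous_Jfunc h _).exists_forall_le (tendsto_atTop_mono (fun u => ?_)
    ((tendsto_atTop_add_const_right _ (-β) tendsto_norm_cocompact_atTop).atTop_div_const hK))
  rw [div_le_iff₀ hK]
  linarith [hβ u]

end

theorem kazdan_warner_negative_nonpositive_general {V : Type*} [Fintype V]
    (ω : V → V → ℝ) (μ : V → ℝ)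
    (hsymm : ∀ x y, ω x y = ω y x)
    (hnonneg : ∀ x y, 0 ≤ ω x y)
    (hconn : graphConn ω)
    (hμ : ∀ x, 0 < μ x)
    (h : V → ℝ) (hle : ∀ x, h x ≤ 0) (hne : ∃ x, h x ≠ 0)
    (c : ℝ) (hc : c < 0) :
    ∃ u : V → ℝ,
      (∀ x, -graphLap ω μ u x = h x * Real.exp (u x) - c) ∧
      (∀ v : V → ℝ, (∀ x, -graphLap ω μ v x = h x * Real.exp (v x) - c) → v = u) ∧
      (∀ v : V → ℝ, v ≠ u →
        Jfunc ω μ h (fun _ => c) u < Jfunc ω μ h (fun _ => c) v) := by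
  obtain ⟨x₀, hx₀⟩ := hne
  obtain ⟨u, hmin⟩ := exists_forall_Jfunc_le hnonneg hconn hμ hle hx₀ hc
  have hu := solution_of_forall_Jfunc_le hsymm hnonneg hμ hmin
  have strict_min {u v : V → ℝ} (hu : ∀ x, -graphLap ω μ u x = h x * exp (u x) - c) (hvu : v ≠ u) :
      Jfunc ω μ h (fun _ => c) u < Jfunc ω μ h (fun _ => c) v :=
    Jfunc_lt_of_solution hsymm hnonneg hconn hμ hle hx₀ hu hvu
  refine ⟨u, hu, fun v hv => ?_, fun v => strict_min hu⟩
  by_contra hvu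
  exact (strict_min hu hvu).not_gt (strict_min hv (Ne.symm hvu))

/-- Uniqueness in the negative case with nonpositive `h`: for `c < 0`, `h ≤ 0` and
`h` not identically zero, `−Δu = h e^u − c` has exactly one solution, and this
solution is the strict global minimum of `J_{h,c}`. -/
theorem kazdan_warner_negative_nonpositive {V : Type*} [Fintype V] [Nonempty V]
    (ω : V → V → ℝ) (μ : V → ℝ)
    (hsymm : ∀ x y, ω x y = ω y x)
    (hnonneg : ∀ x y, 0 ≤ ω x y)
    (hconn : graphConn ω)
    (hμ : ∀ x, 0 < μ x)
    (h : V → ℝ) (hle : ∀ x, h x ≤ 0) (hne : ∃ x, h x ≠ 0)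
    (c : ℝ) (hc : c < 0) :
    ∃ u : V → ℝ,
      (∀ x, -graphLap ω μ u x = h x * Real.exp (u x) - c) ∧
      (∀ v : V → ℝ, (∀ x, -graphLap ω μ v x = h x * Real.exp (v x) - c) → v = u) ∧
      (∀ v : V → ℝ, v ≠ u →
        Jfunc ω μ h (fun _ => c) u < Jfunc ω μ h (fun _ => c) v) :=
  kazdan_warner_negative_nonpositive_general ω μ hsymm hnonneg hconn hμ h hle hne c hc
end

section
/- Necessary condition in the negative case: Let c < 0 and suppose u : V → ℝ satisfies −Δu(x) = h(x)e^{u(x)} − c for all x ∈ V. Then ∫_V h dμ < 0. -/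
open Finset Real

/-- Necessary condition in the negative case: if `c < 0` and `−Δu = h e^u − c` has a
solution, then `∫_V h dμ < 0`. -/
theorem kazdan_warner_negative_necessary {V : Type*} [Fintype V] [Nonempty V]
    (ω : V → V → ℝ) (μ : V → ℝ)
    (hsymm : ∀ x y, ω x y = ω y x)
    (hnonneg : ∀ x y, 0 ≤ ω x y)
    (hconn : graphConn ω)
    (hμ : ∀ x, 0 < μ x)
    (h : V → ℝ) (c : ℝ) (hc : c < 0)
    (u : V → ℝ)
    (hu : ∀ x, -graphLap ω μ u x = h x * Real.exp (u x) - c) :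
    graphInt μ h < 0 := by
  classical
  set φ : V → ℝ := fun x => Real.exp (-u x) with hφ
  have hφpos : ∀ x, 0 < φ x := fun x => Real.exp_pos _
  -- h x * μ x = c * φ x * μ x - ∑ y, ω x y * (u y - u x) * φ x
  have key : ∀ x, h x * μ x = c * φ x * μ x - (∑ y, ω x y * (u y - u x)) * φ x := by
    intro x
    have hx := hu x
    have hμx : μ x ≠ 0 := (hμ x).ne'
    have hlap : graphLap ω μ u x * μ x = ∑ y, ω x y * (u y - u x) := by
      simp [graphLap]; field_simp
    have hexp : Real.exp (u x) * φ x = 1 := by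
      rw [hφ]; simp [← Real.exp_add]
    have h1 : h x * Real.exp (u x) = c - graphLap ω μ u x := by linarith
    have h2 : h x = (c - graphLap ω μ u x) * φ x := by
      have h3 := congrArg (· * φ x) h1
      rw [mul_assoc, hexp, mul_one] at h3
      exact h3
    rw [h2, ← hlap]; ring
  have S_nonneg : 0 ≤ ∑ x, (∑ y, ω x y * (u y - u x)) * φ x := by
    have swap : ∑ x, (∑ y, ω x y * (u y - u x)) * φ x
        = ∑ x, ∑ y, ω x y * (u y - u x) * φ x := by
      simp [Finset.sum_mul]
    have swap2 : (∑ x, ∑ y, ω x y * (u y - u x) * φ x)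
        = ∑ x, ∑ y, ω x y * (u x - u y) * φ y := by
      rw [Finset.sum_comm]
      refine Finset.sum_congr rfl fun y _ => Finset.sum_congr rfl fun x _ => ?_
      rw [hsymm y x]
    have two : 2 * ∑ x, (∑ y, ω x y * (u y - u x)) * φ x
        = ∑ x, ∑ y, ω x y * ((u y - u x) * (φ x - φ y)) := by
      rw [swap, two_mul]
      nth_rewrite 2 [swap2]
      rw [← Finset.sum_add_distrib]
      refine Finset.sum_congr rfl fun x _ => ?_
      rw [← Finset.sum_add_distrib]
      exact Finset.sum_congr rfl fun y _ => by ring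
    have hterm : ∀ x y : V, 0 ≤ ω x y * ((u y - u x) * (φ x - φ y)) := by
      intro x y
      refine mul_nonneg (hnonneg x y) ?_
      rcases le_total (u x) (u y) with hle | hle
      · refine mul_nonneg (by linarith) (by simp [hφ, sub_nonneg, Real.exp_le_exp]; linarith)
      · have h1 : u y - u x ≤ 0 := by linarith
        have h2 : φ x - φ y ≤ 0 := by simp [hφ, sub_nonpos, Real.exp_le_exp]; linarith
        have := mul_nonneg (neg_nonneg.2 h1) (neg_nonneg.2 h2)
        nlinarith [this]
    nlinarith [two, Finset.sum_nonneg (fun x (_ : x ∈ Finset.univ) =>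
      Finset.sum_nonneg (fun y (_ : y ∈ Finset.univ) => hterm x y))]
  have cpart : c * ∑ x, φ x * μ x < 0 := by
    have : 0 < ∑ x, φ x * μ x :=
      Finset.sum_pos (fun x _ => mul_pos (hφpos x) (hμ x)) Finset.univ_nonempty
    exact mul_neg_of_neg_of_pos hc this
  calc graphInt μ h = ∑ x, (c * φ x * μ x - (∑ y, ω x y * (u y - u x)) * φ x) := by
        unfold graphInt; exact Finset.sum_congr rfl fun x _ => key x
    _ = c * (∑ x, φ x * μ x) - ∑ x, (∑ y, ω x y * (u y - u x)) * φ x := by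
        rw [Finset.sum_sub_distrib, Finset.mul_sum]; ring_nf
    _ < 0 := by linarith
end

section
/- Rigidity for h ≡ −1: Let c < 0. Then every function u : V → ℝ satisfying −Δu(x) = −e^{u(x)} − c for all x ∈ V is the constant function u ≡ ln(−c). -/
open Finset Real

/-- Rigidity for `h ≡ −1`: for `c < 0`, every solution of `−Δu = −e^u − c` is the
constant `ln(−c)`. -/
theorem kazdan_warner_rigidity_neg_one {V : Type*} [Fintype V] [Nonempty V]
    (ω : V → V → ℝ) (μ : V → ℝ)
    (hsymm : ∀ x y, ω x y = ω y x)
    (hnonneg : ∀ x y, 0 ≤ ω x y)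
    (hconn : graphConn ω)
    (hμ : ∀ x, 0 < μ x)
    (c : ℝ) (hc : c < 0)
    (u : V → ℝ)
    (hu : ∀ x, -graphLap ω μ u x = -Real.exp (u x) - c) :
    ∀ x, u x = Real.log (-c) := by
  have hcpos : 0 < -c := by linarith
  obtain ⟨x0, -, hmax⟩ := Finset.exists_max_image Finset.univ u
    ⟨Classical.arbitrary V, Finset.mem_univ _⟩
  obtain ⟨x1, -, hmin⟩ := Finset.exists_min_image Finset.univ u
    ⟨Classical.arbitrary V, Finset.mem_univ _⟩
  have hL0 : graphLap ω μ u x0 ≤ 0 := by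
    apply mul_nonpos_of_nonneg_of_nonpos
    · have h := hμ x0; positivity
    · exact Finset.sum_nonpos fun y _ => mul_nonpos_of_nonneg_of_nonpos (hnonneg _ _)
        (by have := hmax y (Finset.mem_univ y); linarith)
  have hL1 : 0 ≤ graphLap ω μ u x1 := by
    apply mul_nonneg
    · have h := hμ x1; positivity
    · exact Finset.sum_nonneg fun y _ => mul_nonneg (hnonneg _ _)
        (by have := hmin y (Finset.mem_univ y); linarith)
  have h0 : Real.exp (u x0) ≤ -c := by have := hu x0; linarith
  have h1 : -c ≤ Real.exp (u x1) := by have := hu x1; linarith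
  have hu0 : u x0 ≤ Real.log (-c) := (Real.le_log_iff_exp_le hcpos).2 h0
  have hu1 : Real.log (-c) ≤ u x1 := (Real.log_le_iff_le_exp hcpos).2 h1
  intro x
  have := hmax x (Finset.mem_univ x)
  have := hmin x (Finset.mem_univ x)
  linarith
end

section
/- Uniqueness for small positive parameter with h ≡ 1: There exists ε₀ > 0 such that for every ε with 0 < ε < ε₀, the constant function u ≡ ln ε is the unique function u : V → ℝ satisfying −Δu(x) = e^{u(x)} − ε for all x ∈ V. -/
open Finset Real

noncomputable def Dsum {V : Type*} [Fintype V] (ω : V → V → ℝ) (w : V → ℝ) : ℝ :=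
  ∑ x, ∑ y, ω x y * (w y - w x) ^ 2

lemma Dsum_nonneg {V : Type*} [Fintype V] (ω : V → V → ℝ) (hnonneg : ∀ x y, 0 ≤ ω x y)
    (w : V → ℝ) : 0 ≤ Dsum ω w := by
  refine Finset.sum_nonneg fun x _ => Finset.sum_nonneg fun y _ => ?_
  exact mul_nonneg (hnonneg x y) (sq_nonneg _)

lemma edge_bound {V : Type*} [Fintype V] (ω : V → V → ℝ) (hnonneg : ∀ x y, 0 ≤ ω x y)
    {a b : V} (hab : 0 < ω a b) (w : V → ℝ) :
    (w b - w a) ^ 2 ≤ Dsum ω w / ω a b := by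
  rw [le_div_iff₀ hab]
  calc (w b - w a) ^ 2 * ω a b = ω a b * (w b - w a) ^ 2 := by ring
    _ ≤ ∑ y, ω a y * (w y - w a) ^ 2 :=
        Finset.single_le_sum (f := fun y => ω a y * (w y - w a) ^ 2)
          (fun y _ => mul_nonneg (hnonneg a y) (sq_nonneg _)) (Finset.mem_univ b)
    _ ≤ Dsum ω w :=
        Finset.single_le_sum (f := fun x => ∑ y, ω x y * (w y - w x) ^ 2)
          (fun x _ => Finset.sum_nonneg fun y _ => mul_nonneg (hnonneg x y) (sq_nonneg _))
          (Finset.mem_univ a)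

lemma chain_bound {V : Type*} [Fintype V] (ω : V → V → ℝ) (hnonneg : ∀ x y, 0 ≤ ω x y) :
    ∀ (m : ℕ) (p : ℕ → V), (∀ i < m, 0 < ω (p i) (p (i + 1))) →
      ∃ C > 0, ∀ w : V → ℝ, (w (p m) - w (p 0)) ^ 2 ≤ C * Dsum ω w := by
  intro m
  induction m with
  | zero =>
    intro p _
    exact ⟨1, one_pos, fun w => by simpa using Dsum_nonneg ω hnonneg w⟩
  | succ m ih =>
    intro p hp
    obtain ⟨C, hC, hCb⟩ := ih p (fun i hi => hp i (Nat.lt_succ_of_lt hi))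
    have hω := hp m (Nat.lt_succ_self m)
    refine ⟨2 * C + 2 / ω (p m) (p (m + 1)), by positivity, fun w => ?_⟩
    have h1 := hCb w
    have h2 := edge_bound ω hnonneg hω w
    have hD := Dsum_nonneg ω hnonneg w
    rw [le_div_iff₀ hω] at h2
    have h2' : 2 * ((w (p (m + 1)) - w (p m)) ^ 2) ≤ 2 / ω (p m) (p (m + 1)) * Dsum ω w := by
      rw [div_mul_eq_mul_div, le_div_iff₀ hω]
      nlinarith
    nlinarith [sq_nonneg (w (p (m + 1)) - w (p m) - (w (p m) - w (p 0)))]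

lemma poincare {V : Type*} [Fintype V] [Nonempty V] (ω : V → V → ℝ)
    (hnonneg : ∀ x y, 0 ≤ ω x y) (hconn : graphConn ω) :
    ∃ C > 0, ∀ (w : V → ℝ) (x y : V), (w x - w y) ^ 2 ≤ C * Dsum ω w := by
  have key : ∀ z : V × V, ∃ C > 0, ∀ w : V → ℝ, (w z.1 - w z.2) ^ 2 ≤ C * Dsum ω w := by
    rintro ⟨x, y⟩
    by_cases hxy : x = y
    · exact ⟨1, one_pos, fun w => by simpa [hxy] using Dsum_nonneg ω hnonneg w⟩
    · obtain ⟨m, p, hp0, hpm, hpe⟩ := hconn y x (fun h => hxy h.symm)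
      obtain ⟨C, hC, hCb⟩ := chain_bound ω hnonneg m p hpe
      exact ⟨C, hC, fun w => by simpa [hp0, hpm] using hCb w⟩
  choose Cf hCf hCb using key
  refine ⟨∑ z, Cf z, Finset.sum_pos (fun z _ => hCf z) Finset.univ_nonempty, fun w x y => ?_⟩
  calc (w x - w y) ^ 2 ≤ Cf (x, y) * Dsum ω w := hCb (x, y) w
    _ ≤ (∑ z, Cf z) * Dsum ω w :=
        mul_le_mul_of_nonneg_right
          (Finset.single_le_sum (fun z _ => (hCf z).le) (Finset.mem_univ _))
          (Dsum_nonneg ω hnonneg w)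

lemma lap_sum_eq {V : Type*} [Fintype V] (ω : V → V → ℝ) (μ : V → ℝ) (hμ : ∀ x, 0 < μ x)
    (g w : V → ℝ) :
    ∑ x, μ x * (g x * graphLap ω μ w x) = ∑ x, ∑ y, ω x y * g x * (w y - w x) := by
  refine Finset.sum_congr rfl fun x _ => ?_
  unfold graphLap
  rw [Finset.mul_sum, Finset.mul_sum, Finset.mul_sum]
  refine Finset.sum_congr rfl fun y _ => ?_
  field_simp [(hμ x).ne']

lemma mass_zero {V : Type*} [Fintype V] (ω : V → V → ℝ) (hsymm : ∀ x y, ω x y = ω y x)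
    (w : V → ℝ) : ∑ x, ∑ y, ω x y * (w y - w x) = 0 := by
  have h1 : ∑ x, ∑ y, ω x y * (w y - w x) = ∑ x, ∑ y, ω x y * (w x - w y) := by
    rw [Finset.sum_comm]
    exact Finset.sum_congr rfl fun a _ => Finset.sum_congr rfl fun b _ => by rw [hsymm b a]
  have h2 : ∑ x, ∑ y, ω x y * (w x - w y) = -∑ x, ∑ y, ω x y * (w y - w x) := by
    rw [← Finset.sum_neg_distrib]
    exact Finset.sum_congr rfl fun a _ => by rw [← Finset.sum_neg_distrib]; exact Finset.sum_congr rfl fun b _ => by ring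
  linarith [h1, h2]

lemma green {V : Type*} [Fintype V] (ω : V → V → ℝ) (μ : V → ℝ)
    (hsymm : ∀ x y, ω x y = ω y x) (hμ : ∀ x, 0 < μ x) (w : V → ℝ) :
    ∑ x, μ x * (w x * graphLap ω μ w x) = -(1 / 2) * Dsum ω w := by
  rw [lap_sum_eq ω μ hμ w w]
  have h1 : ∑ x, ∑ y, ω x y * w x * (w y - w x) = ∑ x, ∑ y, ω x y * w y * (w x - w y) := by
    rw [Finset.sum_comm]
    exact Finset.sum_congr rfl fun a _ => Finset.sum_congr rfl fun b _ => by rw [hsymm b a]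
  have h2 : (∑ x, ∑ y, ω x y * w x * (w y - w x)) + ∑ x, ∑ y, ω x y * w y * (w x - w y)
      = -Dsum ω w := by
    unfold Dsum
    rw [← Finset.sum_neg_distrib, ← Finset.sum_add_distrib]
    refine Finset.sum_congr rfl fun a _ => ?_
    rw [← Finset.sum_neg_distrib, ← Finset.sum_add_distrib]
    exact Finset.sum_congr rfl fun b _ => by ring
  linarith [h1, h2]

lemma texp (t B : ℝ) (hB : 1 ≤ B) (ht : Real.exp t ≤ B) :
    t * (Real.exp t - 1) ≤ B * t ^ 2 := by
  rcases le_or_gt 0 t with h | h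
  · have h1 := Real.add_one_le_exp (-t)
    have h2 := Real.exp_pos t
    have h4 : Real.exp t * Real.exp (-t) = 1 := by rw [← Real.exp_add]; simp
    nlinarith [mul_le_mul_of_nonneg_right h1 h2.le, mul_le_mul_of_nonneg_left ht (mul_nonneg h h)]
  · have h1 := Real.add_one_le_exp t
    nlinarith [mul_nonneg (neg_nonneg.mpr h.le) (sub_nonneg.mpr (by linarith : t ≤ Real.exp t - 1))]


lemma lap_int_zero {V : Type*} [Fintype V] (ω : V → V → ℝ) (μ : V → ℝ)
    (hsymm : ∀ x y, ω x y = ω y x) (hμ : ∀ x, 0 < μ x) (w : V → ℝ) :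
    ∑ x, μ x * graphLap ω μ w x = 0 := by
  have h1 : ∑ x, μ x * graphLap ω μ w x = ∑ x, ∑ y, ω x y * (w y - w x) := by
    refine Finset.sum_congr rfl fun x _ => ?_
    unfold graphLap
    rw [← mul_assoc, mul_one_div_cancel (hμ x).ne', one_mul]
  rw [h1]
  exact mass_zero ω hsymm w

/-- Uniqueness for small positive parameter with `h ≡ 1`: there is `ε₀ > 0` such that
for `0 < ε < ε₀` the constant function `ln ε` is the unique solution of
`−Δu = e^u − ε`. -/
theorem kazdan_warner_small_epsilon_unique {V : Type*} [Fintype V] [Nonempty V]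
    (ω : V → V → ℝ) (μ : V → ℝ)
    (hsymm : ∀ x y, ω x y = ω y x)
    (hnonneg : ∀ x y, 0 ≤ ω x y)
    (hconn : graphConn ω)
    (hμ : ∀ x, 0 < μ x) :
    ∃ ε₀ > (0 : ℝ), ∀ ε : ℝ, 0 < ε → ε < ε₀ →
      (∀ x, -graphLap ω μ (fun _ => Real.log ε) x = Real.exp (Real.log ε) - ε) ∧
      (∀ u : V → ℝ,
        (∀ x, -graphLap ω μ u x = Real.exp (u x) - ε) →
        ∀ x, u x = Real.log ε) := by
  classical
  obtain ⟨C, hC, hpc⟩ := poincare ω hnonneg hconn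
  set S := ∑ x, μ x with hSdef
  have hS : 0 < S := Finset.sum_pos (fun x _ => hμ x) Finset.univ_nonempty
  obtain ⟨xm, -, hxm⟩ := Finset.exists_min_image Finset.univ μ Finset.univ_nonempty
  set B := S / μ xm with hBdef
  have hB1 : 1 ≤ B := by
    rw [hBdef, le_div_iff₀ (hμ xm), one_mul]
    exact Finset.single_le_sum (f := μ) (fun x _ => (hμ x).le) (Finset.mem_univ xm)
  have hB0 : 0 < B := lt_of_lt_of_le one_pos hB1
  refine ⟨1 / (8 * B * C * S), by positivity, fun ε hε hεlt => ⟨fun x => ?_, fun u hu => ?_⟩⟩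
  · have h0 : graphLap ω μ (fun _ => Real.log ε) x = 0 := by
      unfold graphLap; simp
    rw [h0, Real.exp_log hε]; ring
  · set w : V → ℝ := fun z => u z - Real.log ε with hwdef
    have hlapw : ∀ x, graphLap ω μ w x = graphLap ω μ u x := by
      intro x
      unfold graphLap
      congr 1
      refine Finset.sum_congr rfl fun y _ => ?_
      show ω x y * (u y - Real.log ε - (u x - Real.log ε)) = ω x y * (u y - u x)
      ring
    have heq : ∀ x, graphLap ω μ w x = ε - ε * Real.exp (w x) := by
      intro x
      have h1 := hu x
      have h2 : Real.exp (u x) = ε * Real.exp (w x) := by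
        have h3 : u x = w x + Real.log ε := by show u x = u x - Real.log ε + Real.log ε; ring
        rw [h3, Real.exp_add, Real.exp_log hε]; ring
      rw [hlapw x]
      linarith
    have h0 : ∑ x, μ x * (ε - ε * Real.exp (w x)) = 0 := by
      calc ∑ x, μ x * (ε - ε * Real.exp (w x)) = ∑ x, μ x * graphLap ω μ w x :=
            Finset.sum_congr rfl fun x _ => by rw [heq x]
        _ = 0 := lap_int_zero ω μ hsymm hμ w
    have hmass : ∑ x, μ x * Real.exp (w x) = S := by
      have e1 : ∑ x, μ x * (ε - ε * Real.exp (w x))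
          = ε * S - ε * ∑ x, μ x * Real.exp (w x) := by
        rw [hSdef, Finset.mul_sum, Finset.mul_sum, ← Finset.sum_sub_distrib]
        exact Finset.sum_congr rfl fun x _ => by ring
      rw [e1] at h0
      have h4 : ε * (S - ∑ x, μ x * Real.exp (w x)) = 0 := by linarith
      rcases mul_eq_zero.mp h4 with h | h
      · exact absurd h hε.ne'
      · linarith
    have hBe : ∀ x, Real.exp (w x) ≤ B := by
      intro x
      have h5 : μ x * Real.exp (w x) ≤ S := by
        rw [← hmass]
        exact Finset.single_le_sum (f := fun x => μ x * Real.exp (w x))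
          (fun y _ => mul_nonneg (hμ y).le (Real.exp_pos _).le) (Finset.mem_univ x)
      have h6 : μ xm ≤ μ x := hxm x (Finset.mem_univ x)
      rw [hBdef, le_div_iff₀ (hμ xm)]
      nlinarith [Real.exp_pos (w x)]
    have hDeq : Dsum ω w = 2 * ε * ∑ x, μ x * (w x * (Real.exp (w x) - 1)) := by
      have hgr := green ω μ hsymm hμ w
      have h3 : ∑ x, μ x * (w x * graphLap ω μ w x)
          = -ε * ∑ x, μ x * (w x * (Real.exp (w x) - 1)) := by
        rw [Finset.mul_sum]
        refine Finset.sum_congr rfl fun x _ => ?_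
        rw [heq x]; ring
      rw [h3] at hgr
      linear_combination (2 : ℝ) * hgr
    obtain ⟨x1, -, hx1⟩ := Finset.exists_max_image Finset.univ w Finset.univ_nonempty
    obtain ⟨x0, -, hx0⟩ := Finset.exists_min_image Finset.univ w Finset.univ_nonempty
    have hw1 : 0 ≤ w x1 := by
      have hlapmax : graphLap ω μ w x1 ≤ 0 := by
        unfold graphLap
        have hsn : ∑ y, ω x1 y * (w y - w x1) ≤ 0 :=
          Finset.sum_nonpos fun y _ =>
            mul_nonpos_of_nonneg_of_nonpos (hnonneg _ _)
              (by linarith [hx1 y (Finset.mem_univ y)])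
        exact mul_nonpos_of_nonneg_of_nonpos (one_div_pos.mpr (hμ x1)).le hsn
      have h7 : 1 ≤ Real.exp (w x1) := by nlinarith [heq x1]
      rw [show (1 : ℝ) = Real.exp 0 by simp] at h7
      exact Real.exp_le_exp.mp h7
    have hw0 : w x0 ≤ 0 := by
      have hlapmin : 0 ≤ graphLap ω μ w x0 := by
        unfold graphLap
        have hsn : 0 ≤ ∑ y, ω x0 y * (w y - w x0) :=
          Finset.sum_nonneg fun y _ =>
            mul_nonneg (hnonneg _ _) (by linarith [hx0 y (Finset.mem_univ y)])
        exact mul_nonneg (one_div_pos.mpr (hμ x0)).le hsn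
      have h7 : Real.exp (w x0) ≤ 1 := by nlinarith [heq x0]
      rw [show (1 : ℝ) = Real.exp 0 by simp] at h7
      exact Real.exp_le_exp.mp h7
    have hsq : ∀ x, (w x) ^ 2 ≤ 4 * (C * Dsum ω w) := by
      intro x
      have a1 := hpc w x x0
      have a2 := hpc w x1 x0
      nlinarith [mul_nonneg hw1 (neg_nonneg.mpr hw0), sq_nonneg (w x - 2 * w x0),
        sq_nonneg (w x1)]
    have hsum : ∑ x, μ x * (w x * (Real.exp (w x) - 1)) ≤ 4 * B * C * S * Dsum ω w := by
      have hstep : ∀ x : V, μ x * (w x * (Real.exp (w x) - 1))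
          ≤ μ x * (B * (4 * (C * Dsum ω w))) := by
        intro x
        have t1 := texp (w x) B hB1 (hBe x)
        have t2 := hsq x
        have t3 : w x * (Real.exp (w x) - 1) ≤ B * (4 * (C * Dsum ω w)) := by
          nlinarith [hB0]
        exact mul_le_mul_of_nonneg_left t3 (hμ x).le
      calc ∑ x, μ x * (w x * (Real.exp (w x) - 1))
          ≤ ∑ x, μ x * (B * (4 * (C * Dsum ω w))) := Finset.sum_le_sum fun x _ => hstep x
        _ = 4 * B * C * S * Dsum ω w := by rw [← Finset.sum_mul, ← hSdef]; ring
    have hD0 : Dsum ω w = 0 := by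
      have hDnn := Dsum_nonneg ω hnonneg w
      by_contra hne
      have hDpos : 0 < Dsum ω w := lt_of_le_of_ne hDnn (Ne.symm hne)
      have hkey : Dsum ω w ≤ 2 * ε * (4 * B * C * S * Dsum ω w) :=
        calc Dsum ω w = 2 * ε * ∑ x, μ x * (w x * (Real.exp (w x) - 1)) := hDeq
          _ ≤ 2 * ε * (4 * B * C * S * Dsum ω w) :=
              mul_le_mul_of_nonneg_left hsum (by positivity)
      have hε8 : ε * (8 * B * C * S) < 1 := by
        rw [← lt_div_iff₀ (by positivity)]
        exact hεlt
      nlinarith [mul_lt_mul_of_pos_right hε8 hDpos]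
    have hconst : ∀ x y : V, w x = w y := by
      intro x y
      have h8 := hpc w x y
      rw [hD0, mul_zero] at h8
      have h9 : (w x - w y) ^ 2 = 0 := le_antisymm h8 (sq_nonneg _)
      have h10 : w x - w y = 0 := by
        exact pow_eq_zero_iff (two_ne_zero) |>.mp h9
      linarith
    intro x
    have hlz : graphLap ω μ w x = 0 := by
      unfold graphLap
      have hz : ∑ y, ω x y * (w y - w x) = 0 :=
        Finset.sum_eq_zero fun y _ => by rw [hconst y x, sub_self, mul_zero]
      rw [hz, mul_zero]
    have h11 := heq x
    rw [hlz] at h11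
    have h12 : ε * (1 - Real.exp (w x)) = 0 := by linear_combination -h11
    rcases mul_eq_zero.mp h12 with h | h
    · exact absurd h hε.ne'
    · have h13 : Real.exp (w x) = 1 := by linarith
      have h14 : w x = 0 := Real.exp_eq_exp.mp (by rw [h13, Real.exp_zero])
      have : u x - Real.log ε = 0 := h14
      linarith
end

section
/- Local minima are strictly stable: Let h : V → ℝ with h not identically zero and c ∈ ℝ. Suppose u : V → ℝ is a local minimum of J_{h,c}, i.e. there exists δ > 0 such that J_{h,c}(v) ≥ J_{h,c}(u) whenever max_{x∈V}|v(x) − u(x)| < δ. Then u is strictly stable: ∫_V (|∇ξ|² − h e^u ξ²) dμ > 0 for every ξ : V → ℝ with ξ not identically zero. -/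
open Finset Real

lemma lms_pos_cone {A C ε : ℝ} (hε : 0 < ε) (H : ∀ t : ℝ, 0 < t → t ≤ ε → 0 ≤ A + t * C) :
    0 ≤ A := by
  by_contra hA
  push_neg at hA
  have hC : 0 < C := by
    by_contra hC
    push_neg at hC
    have h1 := H ε hε le_rfl
    have h2 : ε * C ≤ 0 := mul_nonpos_of_nonneg_of_nonpos hε.le hC
    linarith
  have hAp : 0 < -A / (2 * C) := div_pos (neg_pos.mpr hA) (by positivity)
  have htpos : 0 < min ε (-A / (2 * C)) := lt_min hε hAp
  have h1 := H _ htpos (min_le_left _ _)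
  have h3 : min ε (-A / (2 * C)) * C ≤ (-A / (2 * C)) * C :=
    mul_le_mul_of_nonneg_right (min_le_right _ _) hC.le
  have h4 : (-A / (2 * C)) * C = -A / 2 := by field_simp
  rw [h4] at h3
  linarith

lemma lms_factor_nonneg {τ X : ℝ} (hτ : 0 < τ) (H : 0 ≤ τ * X) : 0 ≤ X := by
  have h1 := div_nonneg H hτ.le
  rwa [mul_comm, mul_div_assoc, div_self hτ.ne', mul_one] at h1

lemma lms_coeff_nonneg {a b c d e ε : ℝ} (hε : 0 < ε) (hε1 : ε ≤ 1)
    (H : ∀ τ : ℝ, 0 < τ → τ ≤ ε → 0 ≤ a + b * τ + c * τ ^ 2 + d * τ ^ 3 + e * τ ^ 4) :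
    0 ≤ a := by
  apply lms_pos_cone hε (C := |b| + |c| + |d| + |e|)
  intro τ hτ hτε
  have hτ1 : τ ≤ 1 := hτε.trans hε1
  have hp2 : τ ^ 2 ≤ τ := pow_le_of_le_one hτ.le hτ1 (by norm_num)
  have hp3 : τ ^ 3 ≤ τ := pow_le_of_le_one hτ.le hτ1 (by norm_num)
  have hp4 : τ ^ 4 ≤ τ := pow_le_of_le_one hτ.le hτ1 (by norm_num)
  have h2 : b * τ ≤ |b| * τ := mul_le_mul_of_nonneg_right (le_abs_self b) hτ.le
  have h3 : c * τ ^ 2 ≤ |c| * τ :=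
    le_trans (mul_le_mul_of_nonneg_right (le_abs_self c) (by positivity))
      (mul_le_mul_of_nonneg_left hp2 (abs_nonneg c))
  have h4 : d * τ ^ 3 ≤ |d| * τ :=
    le_trans (mul_le_mul_of_nonneg_right (le_abs_self d) (by positivity))
      (mul_le_mul_of_nonneg_left hp3 (abs_nonneg d))
  have h5 : e * τ ^ 4 ≤ |e| * τ :=
    le_trans (mul_le_mul_of_nonneg_right (le_abs_self e) (by positivity))
      (mul_le_mul_of_nonneg_left hp4 (abs_nonneg e))
  have h6 := H τ hτ hτε
  have h7 : τ * (|b| + |c| + |d| + |e|) = |b| * τ + |c| * τ + |d| * τ + |e| * τ := by ring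
  linarith

lemma lms_key_signs {F : ℝ → ℝ} {a₁ a₂ a₃ a₄ K ε : ℝ} (hε : 0 < ε) (hε1 : ε ≤ 1)
    (hF0 : ∀ t : ℝ, |t| ≤ ε → 0 ≤ F t)
    (hFb : ∀ t : ℝ, |t| ≤ ε →
      |F t - (a₁ * t + a₂ * t ^ 2 + a₃ * t ^ 3 + a₄ * t ^ 4)| ≤ K * |t| ^ 5) :
    a₁ = 0 ∧ 0 ≤ a₂ ∧ (a₂ = 0 → a₃ = 0 ∧ 0 ≤ a₄) := by
  have hK : 0 ≤ K := by
    have h1 := hFb ε (le_of_eq (abs_of_pos hε))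
    rw [abs_of_pos hε] at h1
    have h2 := abs_nonneg (F ε - (a₁ * ε + a₂ * ε ^ 2 + a₃ * ε ^ 3 + a₄ * ε ^ 4))
    have h3 : 0 ≤ K * ε ^ 5 := le_trans h2 h1
    exact lms_factor_nonneg (pow_pos hε 5) (le_of_le_of_eq h3 (by ring))
  have key : ∀ t : ℝ, |t| ≤ ε →
      0 ≤ a₁ * t + a₂ * t ^ 2 + a₃ * t ^ 3 + a₄ * t ^ 4 + K * |t| ^ 5 := by
    intro t ht
    have h0 := hF0 t ht
    have hb := (abs_le.mp (hFb t ht)).2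
    linarith
  have keyP : ∀ τ : ℝ, 0 < τ → τ ≤ ε →
      0 ≤ a₁ * τ + a₂ * τ ^ 2 + a₃ * τ ^ 3 + a₄ * τ ^ 4 + K * τ ^ 5 := by
    intro τ hτ hτε
    have h1 := key τ (by rw [abs_of_pos hτ]; exact hτε)
    rwa [abs_of_pos hτ] at h1
  have keyM : ∀ τ : ℝ, 0 < τ → τ ≤ ε →
      0 ≤ -(a₁ * τ) + a₂ * τ ^ 2 - a₃ * τ ^ 3 + a₄ * τ ^ 4 + K * τ ^ 5 := by
    intro τ hτ hτε
    have h1 := key (-τ) (by rw [abs_neg, abs_of_pos hτ]; exact hτε)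
    rw [abs_neg, abs_of_pos hτ] at h1
    exact le_of_le_of_eq h1 (by ring)
  have ha₁p : 0 ≤ a₁ := by
    apply lms_coeff_nonneg hε hε1 (b := a₂) (c := a₃) (d := a₄) (e := K)
    intro τ hτ hτε
    exact lms_factor_nonneg hτ (le_of_le_of_eq (keyP τ hτ hτε) (by ring))
  have ha₁m : 0 ≤ -a₁ := by
    apply lms_coeff_nonneg hε hε1 (b := a₂) (c := -a₃) (d := a₄) (e := K)
    intro τ hτ hτε
    exact lms_factor_nonneg hτ (le_of_le_of_eq (keyM τ hτ hτε) (by ring))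
  have ha₁ : a₁ = 0 := le_antisymm (by linarith) ha₁p
  have ha₂ : 0 ≤ a₂ := by
    apply lms_coeff_nonneg hε hε1 (b := a₃) (c := a₄) (d := K) (e := 0)
    intro τ hτ hτε
    have h1 := keyP τ hτ hτε
    rw [ha₁] at h1
    exact lms_factor_nonneg (mul_pos hτ hτ) (le_of_le_of_eq h1 (by ring))
  refine ⟨ha₁, ha₂, fun ha₂0 => ?_⟩
  have ha₃p : 0 ≤ a₃ := by
    apply lms_coeff_nonneg hε hε1 (b := a₄) (c := K) (d := 0) (e := 0)
    intro τ hτ hτε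
    have h1 := keyP τ hτ hτε
    rw [ha₁, ha₂0] at h1
    exact lms_factor_nonneg (mul_pos (mul_pos hτ hτ) hτ) (le_of_le_of_eq h1 (by ring))
  have ha₃m : 0 ≤ -a₃ := by
    apply lms_coeff_nonneg hε hε1 (b := a₄) (c := K) (d := 0) (e := 0)
    intro τ hτ hτε
    have h1 := keyM τ hτ hτε
    rw [ha₁, ha₂0] at h1
    exact lms_factor_nonneg (mul_pos (mul_pos hτ hτ) hτ) (le_of_le_of_eq h1 (by ring))
  have ha₃ : a₃ = 0 := le_antisymm (by linarith) ha₃p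
  refine ⟨ha₃, ?_⟩
  apply lms_coeff_nonneg hε hε1 (b := K) (c := 0) (d := 0) (e := 0)
  intro τ hτ hτε
  have h1 := keyP τ hτ hτε
  rw [ha₁, ha₂0, ha₃] at h1
  exact lms_factor_nonneg (mul_pos (mul_pos hτ hτ) (mul_pos hτ hτ)) (le_of_le_of_eq h1 (by ring))

section GammaLemmas
variable {V : Type*} [Fintype V] (ω : V → V → ℝ) (μ : V → ℝ)

lemma lms_gamma_nonneg (hnonneg : ∀ x y, 0 ≤ ω x y) (hμ : ∀ x, 0 < μ x) (v : V → ℝ) (x : V) :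
    0 ≤ graphGamma ω μ v v x := by
  unfold graphGamma
  have h1 : 0 < μ x := hμ x
  apply mul_nonneg (by positivity)
  apply Finset.sum_nonneg
  intro y _
  have h2 := hnonneg x y
  have h3 : ω x y * (v y - v x) * (v y - v x) = ω x y * (v y - v x) ^ 2 := by ring
  rw [h3]
  positivity

lemma lms_gradNorm_sq (hnonneg : ∀ x y, 0 ≤ ω x y) (hμ : ∀ x, 0 < μ x) (v : V → ℝ) (x : V) :
    (graphGradNorm ω μ v x) ^ 2 = graphGamma ω μ v v x :=
  Real.sq_sqrt (lms_gamma_nonneg ω μ hnonneg hμ v x)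

lemma lms_gamma_curve (u ξ η : V → ℝ) (t : ℝ) (x : V) :
    graphGamma ω μ (fun z => u z + t * ξ z + t ^ 2 / 2 * η z)
      (fun z => u z + t * ξ z + t ^ 2 / 2 * η z) x
    = graphGamma ω μ u u x + 2 * t * graphGamma ω μ u ξ x + t ^ 2 * graphGamma ω μ u η x
      + t ^ 2 * graphGamma ω μ ξ ξ x + t ^ 3 * graphGamma ω μ ξ η x
      + t ^ 4 / 4 * graphGamma ω μ η η x := by
  simp only [graphGamma]
  rw [show (∑ y, ω x y * ((u y + t * ξ y + t ^ 2 / 2 * η y) - (u x + t * ξ x + t ^ 2 / 2 * η x))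
        * ((u y + t * ξ y + t ^ 2 / 2 * η y) - (u x + t * ξ x + t ^ 2 / 2 * η x)))
      = ∑ y, (ω x y * (u y - u x) * (u y - u x)
        + (2 * t) * (ω x y * (u y - u x) * (ξ y - ξ x))
        + t ^ 2 * (ω x y * (u y - u x) * (η y - η x))
        + t ^ 2 * (ω x y * (ξ y - ξ x) * (ξ y - ξ x))
        + t ^ 3 * (ω x y * (ξ y - ξ x) * (η y - η x))
        + (t ^ 4 / 4) * (ω x y * (η y - η x) * (η y - η x)))
    from Finset.sum_congr rfl fun y _ => by ring]
  simp only [Finset.sum_add_distrib, ← Finset.mul_sum]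
  ring

lemma lms_gamma_bilin (a b : V → ℝ) (s : ℝ) (x : V) :
    graphGamma ω μ (fun z => a z + s * b z) (fun z => a z + s * b z) x
    = graphGamma ω μ a a x + 2 * s * graphGamma ω μ a b x
      + s ^ 2 * graphGamma ω μ b b x := by
  simp only [graphGamma]
  rw [show (∑ y, ω x y * ((a y + s * b y) - (a x + s * b x)) * ((a y + s * b y) - (a x + s * b x)))
      = ∑ y, (ω x y * (a y - a x) * (a y - a x)
        + (2 * s) * (ω x y * (a y - a x) * (b y - b x))
        + s ^ 2 * (ω x y * (b y - b x) * (b y - b x)))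
    from Finset.sum_congr rfl fun y _ => by ring]
  simp only [Finset.sum_add_distrib, ← Finset.mul_sum]
  ring

lemma lms_gamma_zero_left (v : V → ℝ) (x : V) :
    graphGamma ω μ (fun _ => (0 : ℝ)) v x = 0 := by
  simp [graphGamma]

lemma lms_gamma_const_left (k : ℝ) (v : V → ℝ) (x : V) :
    graphGamma ω μ (fun _ => k) v x = 0 := by
  simp [graphGamma]

lemma lms_gi_comb2 (f g : V → ℝ) (a b : ℝ) :
    graphInt μ (fun x => a * f x + b * g x) = a * graphInt μ f + b * graphInt μ g := by
  simp only [graphInt, Finset.mul_sum, ← Finset.sum_add_distrib]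
  exact Finset.sum_congr rfl fun x _ => by ring

lemma lms_gi_comb3 (f g k : V → ℝ) (a b c : ℝ) :
    graphInt μ (fun x => a * f x + b * g x + c * k x)
      = a * graphInt μ f + b * graphInt μ g + c * graphInt μ k := by
  simp only [graphInt, Finset.mul_sum, ← Finset.sum_add_distrib]
  exact Finset.sum_congr rfl fun x _ => by ring

lemma lms_gi_gamma (hμ : ∀ x, 0 < μ x) (a b : V → ℝ) :
    graphInt μ (fun x => graphGamma ω μ a b x)
      = (1 / 2) * ∑ x, ∑ y, ω x y * (a y - a x) * (b y - b x) := by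
  simp only [graphInt, graphGamma, Finset.mul_sum]
  refine Finset.sum_congr rfl fun x _ => ?_
  have h1 : (μ x) ≠ 0 := (hμ x).ne'
  rw [Finset.sum_mul]
  refine Finset.sum_congr rfl fun y _ => ?_
  rw [show (1:ℝ)/(2*μ x) * (ω x y * (a y - a x) * (b y - b x)) * μ x
      = (μ x / μ x) * ((1:ℝ)/2 * (ω x y * (a y - a x) * (b y - b x))) from by ring,
    div_self h1, one_mul]

end GammaLemmas


/-- The remainder term in the fourth-order expansion of `J` along the curve
`t ↦ u + t ξ + (t²/2) η`. -/
noncomputable def lms_remFn {V : Type*} (h u ξ η : V → ℝ) (t : ℝ) (x : V) : ℝ :=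
  -(h x * Real.exp (u x)) *
      (Real.exp (t * ξ x + t ^ 2 / 2 * η x) - 1 - (t * ξ x + t ^ 2 / 2 * η x)
        - (t * ξ x + t ^ 2 / 2 * η x) ^ 2 / 2 - (t * ξ x + t ^ 2 / 2 * η x) ^ 3 / 6
        - (t * ξ x + t ^ 2 / 2 * η x) ^ 4 / 24)
    - h x * Real.exp (u x) *
      (t ^ 5 * (ξ x * η x ^ 2 / 8 + ξ x ^ 3 * η x / 12)
        + t ^ 6 * (η x ^ 3 / 48 + ξ x ^ 2 * η x ^ 2 / 16)
        + t ^ 7 * (ξ x * η x ^ 3 / 48) + t ^ 8 * (η x ^ 4 / 384))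

lemma lms_J_expand {V : Type*} [Fintype V] (ω : V → V → ℝ) (μ : V → ℝ)
    (hnonneg : ∀ x y, 0 ≤ ω x y) (hμ : ∀ x, 0 < μ x)
    (h : V → ℝ) (c : ℝ) (u ξ η : V → ℝ) (t : ℝ) :
    Jfunc ω μ h (fun _ => c) (fun z => u z + t * ξ z + t ^ 2 / 2 * η z)
        - Jfunc ω μ h (fun _ => c) u
      = t * graphInt μ (fun x => graphGamma ω μ u ξ x + c * ξ x - h x * Real.exp (u x) * ξ x)
      + t ^ 2 * graphInt μ (fun x =>
          (1 / 2) * (graphGamma ω μ u η x + c * η x - h x * Real.exp (u x) * η x)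
          + (1 / 2) * (graphGamma ω μ ξ ξ x - h x * Real.exp (u x) * ξ x * ξ x))
      + t ^ 3 * graphInt μ (fun x =>
          (1 / 2) * (graphGamma ω μ ξ η x - h x * Real.exp (u x) * ξ x * η x)
          - h x * Real.exp (u x) * (ξ x * ξ x * ξ x) / 6)
      + t ^ 4 * graphInt μ (fun x =>
          (1 / 8) * (graphGamma ω μ η η x - h x * Real.exp (u x) * η x * η x)
          - h x * Real.exp (u x) * (ξ x * ξ x * η x / 4 + ξ x * ξ x * ξ x * ξ x / 24))
      + graphInt μ (lms_remFn h u ξ η t) := by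
  simp only [Jfunc, graphInt, Finset.mul_sum, ← Finset.sum_add_distrib, ← Finset.sum_sub_distrib]
  refine Finset.sum_congr rfl fun x _ => ?_
  rw [lms_gradNorm_sq ω μ hnonneg hμ (fun z => u z + t * ξ z + t ^ 2 / 2 * η z) x,
    lms_gradNorm_sq ω μ hnonneg hμ u x, lms_gamma_curve ω μ u ξ η t x,
    show u x + t * ξ x + t ^ 2 / 2 * η x = u x + (t * ξ x + t ^ 2 / 2 * η x) from by ring,
    Real.exp_add]
  simp only [lms_remFn]
  ring

lemma lms_exp_taylor5 (s : ℝ) (hs : |s| ≤ 1) :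
    |Real.exp s - (1 + s + s ^ 2 / 2 + s ^ 3 / 6 + s ^ 4 / 24)| ≤ |s| ^ 5 := by
  have h1 := Real.exp_bound hs (n := 5) (by norm_num)
  have h2 : (∑ m ∈ Finset.range 5, s ^ m / m.factorial)
      = 1 + s + s ^ 2 / 2 + s ^ 3 / 6 + s ^ 4 / 24 := by
    norm_num [Finset.sum_range_succ, Nat.factorial]
  rw [h2] at h1
  have h3 : |s| ^ 5 * ((5 : ℕ).succ / ((5 : ℕ).factorial * 5) : ℝ) ≤ |s| ^ 5 := by
    have h4 : ((5 : ℕ).succ / ((5 : ℕ).factorial * 5) : ℝ) = 1 / 100 := by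
      norm_num [Nat.factorial]
    rw [h4]
    nlinarith [pow_nonneg (abs_nonneg s) 5]
  exact h1.trans h3

lemma lms_rem_bound {V : Type*} [Fintype V] (μ h u ξ η : V → ℝ) (hμ : ∀ x, 0 < μ x) :
    ∃ K : ℝ, ∀ t : ℝ, |t| ≤ 1 / ((∑ x, (|ξ x| + |η x|)) + 1) →
      |graphInt μ (lms_remFn h u ξ η t)| ≤ K * |t| ^ 5 := by
  classical
  set M : ℝ := ∑ x, (|ξ x| + |η x|) with hM
  have hM0 : 0 ≤ M := Finset.sum_nonneg fun x _ => by positivity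
  set D : V → ℝ := fun x =>
    |ξ x * η x ^ 2 / 8 + ξ x ^ 3 * η x / 12| + |η x ^ 3 / 48 + ξ x ^ 2 * η x ^ 2 / 16|
      + |ξ x * η x ^ 3 / 48| + |η x ^ 4 / 384| with hD
  refine ⟨∑ x, (|h x * Real.exp (u x)| * ((M + 1) ^ 5 + D x)) * μ x, ?_⟩
  intro t ht
  have hMpos : (0 : ℝ) < M + 1 := by linarith
  have ht1 : |t| ≤ 1 := by
    have : 1 / (M + 1) ≤ 1 := by
      rw [div_le_one hMpos]; linarith
    exact ht.trans this
  -- pointwise bound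
  have hpt : ∀ x : V, |lms_remFn h u ξ η t x|
      ≤ (|h x * Real.exp (u x)| * ((M + 1) ^ 5 + D x)) * |t| ^ 5 := by
    intro x
    set s : ℝ := t * ξ x + t ^ 2 / 2 * η x with hs
    have hax : |ξ x| + |η x| ≤ M := by
      refine Finset.single_le_sum (f := fun x => |ξ x| + |η x|) (fun i _ => by positivity)
        (Finset.mem_univ x)
    have hsabs : |s| ≤ |t| * (M + 1) := by
      have h1 : |s| ≤ |t * ξ x| + |t ^ 2 / 2 * η x| := abs_add_le _ _
      rw [abs_mul, abs_mul] at h1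
      have h2 : |t ^ 2 / 2| = t ^ 2 / 2 := abs_of_nonneg (by positivity)
      rw [h2] at h1
      have h3 : t ^ 2 / 2 ≤ |t| := by
        have : t ^ 2 = |t| ^ 2 := (sq_abs t).symm
        nlinarith [abs_nonneg t]
      have h4 : t ^ 2 / 2 * |η x| ≤ |t| * |η x| :=
        mul_le_mul_of_nonneg_right h3 (abs_nonneg _)
      have h5 : |t| * |ξ x| + |t| * |η x| = |t| * (|ξ x| + |η x|) := by ring
      have h6 : |t| * (|ξ x| + |η x|) ≤ |t| * (M + 1) :=
        mul_le_mul_of_nonneg_left (by linarith) (abs_nonneg t)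
      linarith
    have hs1 : |s| ≤ 1 := by
      have h7 : |t| * (M + 1) ≤ (1 / (M + 1)) * (M + 1) :=
        mul_le_mul_of_nonneg_right ht hMpos.le
      rw [one_div, inv_mul_cancel₀ hMpos.ne'] at h7
      exact hsabs.trans h7
    have hexp : |Real.exp s - (1 + s + s ^ 2 / 2 + s ^ 3 / 6 + s ^ 4 / 24)| ≤ |s| ^ 5 :=
      lms_exp_taylor5 s hs1
    have hspow : |s| ^ 5 ≤ |t| ^ 5 * (M + 1) ^ 5 := by
      calc |s| ^ 5 ≤ (|t| * (M + 1)) ^ 5 := pow_le_pow_left₀ (abs_nonneg s) hsabs 5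
      _ = |t| ^ 5 * (M + 1) ^ 5 := by ring
    -- tail bound
    have htail : |t ^ 5 * (ξ x * η x ^ 2 / 8 + ξ x ^ 3 * η x / 12)
        + t ^ 6 * (η x ^ 3 / 48 + ξ x ^ 2 * η x ^ 2 / 16)
        + t ^ 7 * (ξ x * η x ^ 3 / 48) + t ^ 8 * (η x ^ 4 / 384)| ≤ |t| ^ 5 * D x := by
      have e5 : |t ^ 5| = |t| ^ 5 := abs_pow t 5
      have e6 : |t ^ 6| ≤ |t| ^ 5 := by
        rw [abs_pow]
        exact pow_le_pow_of_le_one (abs_nonneg t) ht1 (by norm_num)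
      have e7 : |t ^ 7| ≤ |t| ^ 5 := by
        rw [abs_pow]
        exact pow_le_pow_of_le_one (abs_nonneg t) ht1 (by norm_num)
      have e8 : |t ^ 8| ≤ |t| ^ 5 := by
        rw [abs_pow]
        exact pow_le_pow_of_le_one (abs_nonneg t) ht1 (by norm_num)
      calc |t ^ 5 * (ξ x * η x ^ 2 / 8 + ξ x ^ 3 * η x / 12)
            + t ^ 6 * (η x ^ 3 / 48 + ξ x ^ 2 * η x ^ 2 / 16)
            + t ^ 7 * (ξ x * η x ^ 3 / 48) + t ^ 8 * (η x ^ 4 / 384)|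
          ≤ |t ^ 5 * (ξ x * η x ^ 2 / 8 + ξ x ^ 3 * η x / 12)|
            + |t ^ 6 * (η x ^ 3 / 48 + ξ x ^ 2 * η x ^ 2 / 16)|
            + |t ^ 7 * (ξ x * η x ^ 3 / 48)| + |t ^ 8 * (η x ^ 4 / 384)| := by
            exact (abs_add_three _ _ _).trans (by
              have := abs_add_le (t ^ 5 * (ξ x * η x ^ 2 / 8 + ξ x ^ 3 * η x / 12))
                (t ^ 6 * (η x ^ 3 / 48 + ξ x ^ 2 * η x ^ 2 / 16))
              linarith [abs_add_le (t ^ 5 * (ξ x * η x ^ 2 / 8 + ξ x ^ 3 * η x / 12) +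
                t ^ 6 * (η x ^ 3 / 48 + ξ x ^ 2 * η x ^ 2 / 16)) (t ^ 7 * (ξ x * η x ^ 3 / 48))])
        _ ≤ |t| ^ 5 * |ξ x * η x ^ 2 / 8 + ξ x ^ 3 * η x / 12|
            + |t| ^ 5 * |η x ^ 3 / 48 + ξ x ^ 2 * η x ^ 2 / 16|
            + |t| ^ 5 * |ξ x * η x ^ 3 / 48| + |t| ^ 5 * |η x ^ 4 / 384| := by
            rw [abs_mul, abs_mul, abs_mul, abs_mul, e5]
            have b6 := mul_le_mul_of_nonneg_right e6 (abs_nonneg (η x ^ 3 / 48 + ξ x ^ 2 * η x ^ 2 / 16))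
            have b7 := mul_le_mul_of_nonneg_right e7 (abs_nonneg (ξ x * η x ^ 3 / 48))
            have b8 := mul_le_mul_of_nonneg_right e8 (abs_nonneg (η x ^ 4 / 384))
            linarith
        _ = |t| ^ 5 * D x := by rw [hD]; ring
    -- combine
    have hcomb : |lms_remFn h u ξ η t x|
        ≤ |h x * Real.exp (u x)| * (|t| ^ 5 * (M + 1) ^ 5) + |h x * Real.exp (u x)| * (|t| ^ 5 * D x) := by
      have h9 : |lms_remFn h u ξ η t x|
          ≤ |h x * Real.exp (u x)| * |Real.exp s - (1 + s + s ^ 2 / 2 + s ^ 3 / 6 + s ^ 4 / 24)|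
            + |h x * Real.exp (u x)| * |t ^ 5 * (ξ x * η x ^ 2 / 8 + ξ x ^ 3 * η x / 12)
              + t ^ 6 * (η x ^ 3 / 48 + ξ x ^ 2 * η x ^ 2 / 16)
              + t ^ 7 * (ξ x * η x ^ 3 / 48) + t ^ 8 * (η x ^ 4 / 384)| := by
        rw [lms_remFn]
        have h10 := abs_add_le
          (-(h x * Real.exp (u x)) * (Real.exp s - 1 - s - s ^ 2 / 2 - s ^ 3 / 6 - s ^ 4 / 24))
          (-(h x * Real.exp (u x) * (t ^ 5 * (ξ x * η x ^ 2 / 8 + ξ x ^ 3 * η x / 12)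
            + t ^ 6 * (η x ^ 3 / 48 + ξ x ^ 2 * η x ^ 2 / 16)
            + t ^ 7 * (ξ x * η x ^ 3 / 48) + t ^ 8 * (η x ^ 4 / 384))))
        rw [show -(h x * Real.exp (u x)) * (Real.exp s - 1 - s - s ^ 2 / 2 - s ^ 3 / 6 - s ^ 4 / 24)
            + -(h x * Real.exp (u x) * (t ^ 5 * (ξ x * η x ^ 2 / 8 + ξ x ^ 3 * η x / 12)
              + t ^ 6 * (η x ^ 3 / 48 + ξ x ^ 2 * η x ^ 2 / 16)
              + t ^ 7 * (ξ x * η x ^ 3 / 48) + t ^ 8 * (η x ^ 4 / 384)))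
            = -(h x * Real.exp (u x)) * (Real.exp s - 1 - s - s ^ 2 / 2 - s ^ 3 / 6 - s ^ 4 / 24)
              - h x * Real.exp (u x) * (t ^ 5 * (ξ x * η x ^ 2 / 8 + ξ x ^ 3 * η x / 12)
              + t ^ 6 * (η x ^ 3 / 48 + ξ x ^ 2 * η x ^ 2 / 16)
              + t ^ 7 * (ξ x * η x ^ 3 / 48) + t ^ 8 * (η x ^ 4 / 384)) from by ring] at h10
        refine h10.trans (le_of_eq ?_)
        rw [show (Real.exp s - 1 - s - s ^ 2 / 2 - s ^ 3 / 6 - s ^ 4 / 24)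
            = Real.exp s - (1 + s + s ^ 2 / 2 + s ^ 3 / 6 + s ^ 4 / 24) from by ring]
        simp only [abs_neg, abs_mul]
      have h11 := mul_le_mul_of_nonneg_left (hexp.trans hspow) (abs_nonneg (h x * Real.exp (u x)))
      have h12 := mul_le_mul_of_nonneg_left htail (abs_nonneg (h x * Real.exp (u x)))
      exact h9.trans (add_le_add h11 h12)
    calc |lms_remFn h u ξ η t x|
        ≤ |h x * Real.exp (u x)| * (|t| ^ 5 * (M + 1) ^ 5)
          + |h x * Real.exp (u x)| * (|t| ^ 5 * D x) := hcomb
      _ = (|h x * Real.exp (u x)| * ((M + 1) ^ 5 + D x)) * |t| ^ 5 := by ring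
  -- sum up
  calc |graphInt μ (lms_remFn h u ξ η t)|
      ≤ ∑ x, |lms_remFn h u ξ η t x * μ x| := Finset.abs_sum_le_sum_abs _ _
    _ ≤ ∑ x, ((|h x * Real.exp (u x)| * ((M + 1) ^ 5 + D x)) * μ x) * |t| ^ 5 := by
        refine Finset.sum_le_sum fun x _ => ?_
        rw [abs_mul, abs_of_pos (hμ x)]
        calc |lms_remFn h u ξ η t x| * μ x
            ≤ ((|h x * Real.exp (u x)| * ((M + 1) ^ 5 + D x)) * |t| ^ 5) * μ x :=
              mul_le_mul_of_nonneg_right (hpt x) (hμ x).le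
          _ = ((|h x * Real.exp (u x)| * ((M + 1) ^ 5 + D x)) * μ x) * |t| ^ 5 := by ring
    _ = (∑ x, (|h x * Real.exp (u x)| * ((M + 1) ^ 5 + D x)) * μ x) * |t| ^ 5 := by
        rw [Finset.sum_mul]

lemma lms_cube_nonneg (a b : ℝ) : 0 ≤ (b - a) * (b * b * b - a * a * a) := by
  have key : 2 * ((b - a) * (b * b * b - a * a * a))
      = (b - a) ^ 2 * ((a + b) ^ 2 + a ^ 2 + b ^ 2) := by ring
  have h1 : 0 ≤ (b - a) ^ 2 * ((a + b) ^ 2 + a ^ 2 + b ^ 2) := by positivity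
  linarith

lemma lms_cube_eq {a b : ℝ} (H : (b - a) * (b * b * b - a * a * a) = 0) : a = b := by
  have key : (b - a) ^ 2 * ((a + b) ^ 2 + a ^ 2 + b ^ 2) = 0 := by linear_combination 2 * H
  rcases mul_eq_zero.mp key with h1 | h2
  · have h3 : b - a = 0 := by
      have := pow_eq_zero_iff (n := 2) (by norm_num) |>.mp h1
      exact this
    linarith
  · have ha : a = 0 := by nlinarith [sq_nonneg (a + b), sq_nonneg a, sq_nonneg b]
    have hb : b = 0 := by nlinarith [sq_nonneg (a + b), sq_nonneg a, sq_nonneg b]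
    rw [ha, hb]

/-- Local minima of `J_{h,c}` are strictly stable, provided `h` is not identically
zero. -/
theorem local_min_strictly_stable {V : Type*} [Fintype V] [Nonempty V]
    (ω : V → V → ℝ) (μ : V → ℝ)
    (hsymm : ∀ x y, ω x y = ω y x)
    (hnonneg : ∀ x y, 0 ≤ ω x y)
    (hconn : graphConn ω)
    (hμ : ∀ x, 0 < μ x)
    (h : V → ℝ) (hne : ∃ x, h x ≠ 0) (c : ℝ)
    (u : V → ℝ)
    (hmin : ∃ δ > (0 : ℝ), ∀ v : V → ℝ, (∀ x, |v x - u x| < δ) →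
      Jfunc ω μ h (fun _ => c) u ≤ Jfunc ω μ h (fun _ => c) v) :
    ∀ ξ : V → ℝ, (∃ x, ξ x ≠ 0) →
      0 < graphInt μ
        (fun x => (graphGradNorm ω μ ξ x) ^ 2 - h x * Real.exp (u x) * (ξ x) ^ 2) := by
  classical
  intro ξ hξ
  obtain ⟨δ, hδ, hminδ⟩ := hmin
  -- The master expansion consequences, for every pair of directions.
  have master : ∀ ξ' η' : V → ℝ,
      graphInt μ (fun x => graphGamma ω μ u ξ' x + c * ξ' x - h x * Real.exp (u x) * ξ' x) = 0 ∧
      0 ≤ graphInt μ (fun x =>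
          (1 / 2) * (graphGamma ω μ u η' x + c * η' x - h x * Real.exp (u x) * η' x)
          + (1 / 2) * (graphGamma ω μ ξ' ξ' x - h x * Real.exp (u x) * ξ' x * ξ' x)) ∧
      (graphInt μ (fun x =>
          (1 / 2) * (graphGamma ω μ u η' x + c * η' x - h x * Real.exp (u x) * η' x)
          + (1 / 2) * (graphGamma ω μ ξ' ξ' x - h x * Real.exp (u x) * ξ' x * ξ' x)) = 0 →
        graphInt μ (fun x =>
          (1 / 2) * (graphGamma ω μ ξ' η' x - h x * Real.exp (u x) * ξ' x * η' x)
          - h x * Real.exp (u x) * (ξ' x * ξ' x * ξ' x) / 6) = 0 ∧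
        0 ≤ graphInt μ (fun x =>
          (1 / 8) * (graphGamma ω μ η' η' x - h x * Real.exp (u x) * η' x * η' x)
          - h x * Real.exp (u x) * (ξ' x * ξ' x * η' x / 4
            + ξ' x * ξ' x * ξ' x * ξ' x / 24))) := by
    intro ξ' η'
    obtain ⟨K, hK⟩ := lms_rem_bound μ h u ξ' η' hμ
    set M : ℝ := ∑ x, (|ξ' x| + |η' x|) with hM
    have hM0 : 0 ≤ M := Finset.sum_nonneg fun x _ => by positivity
    have hMpos : (0 : ℝ) < M + 1 := by linarith
    set ε : ℝ := min (1 / (M + 1)) (δ / (2 * (M + 1))) with hεdef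
    have hεpos : 0 < ε := lt_min (by positivity) (by positivity)
    have hεle : ε ≤ 1 / (M + 1) := min_le_left _ _
    have hεδ : ε ≤ δ / (2 * (M + 1)) := min_le_right _ _
    have hε1 : ε ≤ 1 := hεle.trans (by rw [div_le_one hMpos]; linarith)
    have hsbound : ∀ t : ℝ, |t| ≤ ε → ∀ x : V,
        |t * ξ' x + t ^ 2 / 2 * η' x| ≤ |t| * (M + 1) := by
      intro t ht x
      have ht1 : |t| ≤ 1 := ht.trans hε1
      have hax : |ξ' x| + |η' x| ≤ M :=
        Finset.single_le_sum (f := fun x => |ξ' x| + |η' x|) (fun i _ => by positivity)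
          (Finset.mem_univ x)
      have h1 : |t * ξ' x + t ^ 2 / 2 * η' x| ≤ |t * ξ' x| + |t ^ 2 / 2 * η' x| := abs_add_le _ _
      rw [abs_mul, abs_mul] at h1
      have h2 : |t ^ 2 / 2| = t ^ 2 / 2 := abs_of_nonneg (by positivity)
      rw [h2] at h1
      have h3 : t ^ 2 / 2 ≤ |t| := by
        have h4 : t ^ 2 = |t| ^ 2 := (sq_abs t).symm
        nlinarith [abs_nonneg t]
      have h4 : t ^ 2 / 2 * |η' x| ≤ |t| * |η' x| :=
        mul_le_mul_of_nonneg_right h3 (abs_nonneg _)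
      have h5 : |t| * (|ξ' x| + |η' x|) ≤ |t| * (M + 1) :=
        mul_le_mul_of_nonneg_left (by linarith) (abs_nonneg t)
      have h6 : |t| * |ξ' x| + |t| * |η' x| = |t| * (|ξ' x| + |η' x|) := by ring
      linarith
    have hF0 : ∀ t : ℝ, |t| ≤ ε →
        0 ≤ Jfunc ω μ h (fun _ => c) (fun z => u z + t * ξ' z + t ^ 2 / 2 * η' z)
          - Jfunc ω μ h (fun _ => c) u := by
      intro t ht
      have hcl : ∀ x : V, |(u x + t * ξ' x + t ^ 2 / 2 * η' x) - u x| < δ := by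
        intro x
        rw [show (u x + t * ξ' x + t ^ 2 / 2 * η' x) - u x
            = t * ξ' x + t ^ 2 / 2 * η' x from by ring]
        have h1 := hsbound t ht x
        have h2 : |t| * (M + 1) ≤ ε * (M + 1) :=
          mul_le_mul_of_nonneg_right ht hMpos.le
        have h3 : ε * (M + 1) ≤ (δ / (2 * (M + 1))) * (M + 1) :=
          mul_le_mul_of_nonneg_right hεδ hMpos.le
        have h4 : (δ / (2 * (M + 1))) * (M + 1) = δ / 2 := by
          field_simp
        linarith
      have := hminδ (fun z => u z + t * ξ' z + t ^ 2 / 2 * η' z) hcl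
      linarith
    have hFb : ∀ t : ℝ, |t| ≤ ε →
        |(Jfunc ω μ h (fun _ => c) (fun z => u z + t * ξ' z + t ^ 2 / 2 * η' z)
            - Jfunc ω μ h (fun _ => c) u)
          - (graphInt μ (fun x => graphGamma ω μ u ξ' x + c * ξ' x
                - h x * Real.exp (u x) * ξ' x) * t
            + graphInt μ (fun x =>
                (1 / 2) * (graphGamma ω μ u η' x + c * η' x - h x * Real.exp (u x) * η' x)
                + (1 / 2) * (graphGamma ω μ ξ' ξ' x - h x * Real.exp (u x) * ξ' x * ξ' x)) * t ^ 2
            + graphInt μ (fun x =>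
                (1 / 2) * (graphGamma ω μ ξ' η' x - h x * Real.exp (u x) * ξ' x * η' x)
                - h x * Real.exp (u x) * (ξ' x * ξ' x * ξ' x) / 6) * t ^ 3
            + graphInt μ (fun x =>
                (1 / 8) * (graphGamma ω μ η' η' x - h x * Real.exp (u x) * η' x * η' x)
                - h x * Real.exp (u x) * (ξ' x * ξ' x * η' x / 4
                  + ξ' x * ξ' x * ξ' x * ξ' x / 24)) * t ^ 4)|
          ≤ K * |t| ^ 5 := by
      intro t ht
      have hid := lms_J_expand ω μ hnonneg hμ h c u ξ' η' t
      rw [show (Jfunc ω μ h (fun _ => c) (fun z => u z + t * ξ' z + t ^ 2 / 2 * η' z)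
            - Jfunc ω μ h (fun _ => c) u)
          - (graphInt μ (fun x => graphGamma ω μ u ξ' x + c * ξ' x
                - h x * Real.exp (u x) * ξ' x) * t
            + graphInt μ (fun x =>
                (1 / 2) * (graphGamma ω μ u η' x + c * η' x - h x * Real.exp (u x) * η' x)
                + (1 / 2) * (graphGamma ω μ ξ' ξ' x - h x * Real.exp (u x) * ξ' x * ξ' x)) * t ^ 2
            + graphInt μ (fun x =>
                (1 / 2) * (graphGamma ω μ ξ' η' x - h x * Real.exp (u x) * ξ' x * η' x)
                - h x * Real.exp (u x) * (ξ' x * ξ' x * ξ' x) / 6) * t ^ 3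
            + graphInt μ (fun x =>
                (1 / 8) * (graphGamma ω μ η' η' x - h x * Real.exp (u x) * η' x * η' x)
                - h x * Real.exp (u x) * (ξ' x * ξ' x * η' x / 4
                  + ξ' x * ξ' x * ξ' x * ξ' x / 24)) * t ^ 4)
          = graphInt μ (lms_remFn h u ξ' η' t) from by linear_combination hid]
      exact hK t (ht.trans hεle)
    exact lms_key_signs hεpos hε1 hF0 hFb
  -- First variation vanishes.
  have firstvar : ∀ v : V → ℝ,
      graphInt μ (fun x => graphGamma ω μ u v x + c * v x - h x * Real.exp (u x) * v x) = 0 :=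
    fun v => (master v v).1
  -- Second variation is nonnegative.
  have Qnonneg : ∀ v : V → ℝ,
      0 ≤ graphInt μ (fun x => graphGamma ω μ v v x - h x * Real.exp (u x) * v x * v x) := by
    intro v
    have h1 := (master v v).2.1
    have h2 : graphInt μ (fun x =>
          (1 / 2) * (graphGamma ω μ u v x + c * v x - h x * Real.exp (u x) * v x)
          + (1 / 2) * (graphGamma ω μ v v x - h x * Real.exp (u x) * v x * v x))
        = (1 / 2) * graphInt μ (fun x =>
            graphGamma ω μ u v x + c * v x - h x * Real.exp (u x) * v x)
          + (1 / 2) * graphInt μ (fun x =>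
            graphGamma ω μ v v x - h x * Real.exp (u x) * v x * v x) := by
      simp only [graphInt, Finset.mul_sum, ← Finset.sum_add_distrib]
      exact Finset.sum_congr rfl fun x _ => by ring
    rw [h2, firstvar v] at h1
    linarith
  -- Towards a contradiction.
  by_contra hcon
  push_neg at hcon
  have hgoal_eq : graphInt μ
        (fun x => (graphGradNorm ω μ ξ x) ^ 2 - h x * Real.exp (u x) * (ξ x) ^ 2)
      = graphInt μ (fun x => graphGamma ω μ ξ ξ x - h x * Real.exp (u x) * ξ x * ξ x) := by
    simp only [graphInt]
    refine Finset.sum_congr rfl fun x _ => ?_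
    rw [lms_gradNorm_sq ω μ hnonneg hμ ξ x]
    ring
  rw [hgoal_eq] at hcon
  have hQξ : graphInt μ (fun x => graphGamma ω μ ξ ξ x - h x * Real.exp (u x) * ξ x * ξ x)
      = 0 := le_antisymm hcon (Qnonneg ξ)
  -- Polarization: the associated bilinear form vanishes against ξ.
  have hB : ∀ η' : V → ℝ,
      graphInt μ (fun x => graphGamma ω μ ξ η' x - h x * Real.exp (u x) * ξ x * η' x) = 0 := by
    intro η'
    have hexpQ : ∀ s : ℝ,
        0 ≤ 2 * s * graphInt μ (fun x =>
            graphGamma ω μ ξ η' x - h x * Real.exp (u x) * ξ x * η' x)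
          + s ^ 2 * graphInt μ (fun x =>
            graphGamma ω μ η' η' x - h x * Real.exp (u x) * η' x * η' x) := by
      intro s
      have h1 := Qnonneg (fun z => ξ z + s * η' z)
      have h2 : graphInt μ (fun x =>
            graphGamma ω μ (fun z => ξ z + s * η' z) (fun z => ξ z + s * η' z) x
              - h x * Real.exp (u x) * (ξ x + s * η' x) * (ξ x + s * η' x))
          = graphInt μ (fun x => graphGamma ω μ ξ ξ x - h x * Real.exp (u x) * ξ x * ξ x)
            + (2 * s) * graphInt μ (fun x =>
                graphGamma ω μ ξ η' x - h x * Real.exp (u x) * ξ x * η' x)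
            + s ^ 2 * graphInt μ (fun x =>
                graphGamma ω μ η' η' x - h x * Real.exp (u x) * η' x * η' x) := by
        simp only [graphInt, Finset.mul_sum, ← Finset.sum_add_distrib]
        refine Finset.sum_congr rfl fun x _ => ?_
        rw [lms_gamma_bilin ω μ ξ η' s x]
        ring
      rw [h2, hQξ] at h1
      linarith
    have hBp : 0 ≤ 2 * graphInt μ (fun x =>
        graphGamma ω μ ξ η' x - h x * Real.exp (u x) * ξ x * η' x) := by
      apply lms_coeff_nonneg (ε := 1) one_pos le_rfl
        (b := graphInt μ (fun x =>
          graphGamma ω μ η' η' x - h x * Real.exp (u x) * η' x * η' x))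
        (c := 0) (d := 0) (e := 0)
      intro τ hτ _
      exact lms_factor_nonneg hτ (le_of_le_of_eq (hexpQ τ) (by ring))
    have hBm : 0 ≤ -(2 * graphInt μ (fun x =>
        graphGamma ω μ ξ η' x - h x * Real.exp (u x) * ξ x * η' x)) := by
      apply lms_coeff_nonneg (ε := 1) one_pos le_rfl
        (b := graphInt μ (fun x =>
          graphGamma ω μ η' η' x - h x * Real.exp (u x) * η' x * η' x))
        (c := 0) (d := 0) (e := 0)
      intro τ hτ _
      exact lms_factor_nonneg hτ (le_of_le_of_eq (hexpQ (-τ)) (by ring))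
    linarith
  -- Third and fourth order information in the direction η' = ξ.
  have ha₂0 : graphInt μ (fun x =>
      (1 / 2) * (graphGamma ω μ u ξ x + c * ξ x - h x * Real.exp (u x) * ξ x)
      + (1 / 2) * (graphGamma ω μ ξ ξ x - h x * Real.exp (u x) * ξ x * ξ x)) = 0 := by
    have h2 : graphInt μ (fun x =>
          (1 / 2) * (graphGamma ω μ u ξ x + c * ξ x - h x * Real.exp (u x) * ξ x)
          + (1 / 2) * (graphGamma ω μ ξ ξ x - h x * Real.exp (u x) * ξ x * ξ x))
        = (1 / 2) * graphInt μ (fun x =>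
            graphGamma ω μ u ξ x + c * ξ x - h x * Real.exp (u x) * ξ x)
          + (1 / 2) * graphInt μ (fun x =>
            graphGamma ω μ ξ ξ x - h x * Real.exp (u x) * ξ x * ξ x) := by
      simp only [graphInt, Finset.mul_sum, ← Finset.sum_add_distrib]
      exact Finset.sum_congr rfl fun x _ => by ring
    rw [h2, firstvar ξ, hQξ]
    ring
  obtain ⟨ha₃, ha₄⟩ := (master ξ ξ).2.2 ha₂0
  have hm3 : graphInt μ (fun x => h x * Real.exp (u x) * (ξ x * ξ x * ξ x)) = 0 := by
    have hsplit : graphInt μ (fun x =>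
          (1 / 2) * (graphGamma ω μ ξ ξ x - h x * Real.exp (u x) * ξ x * ξ x)
          - h x * Real.exp (u x) * (ξ x * ξ x * ξ x) / 6)
        = (1 / 2) * graphInt μ (fun x =>
            graphGamma ω μ ξ ξ x - h x * Real.exp (u x) * ξ x * ξ x)
          - (1 / 6) * graphInt μ (fun x => h x * Real.exp (u x) * (ξ x * ξ x * ξ x)) := by
      simp only [graphInt, Finset.mul_sum, ← Finset.sum_sub_distrib]
      exact Finset.sum_congr rfl fun x _ => by ring
    rw [hsplit, hQξ] at ha₃
    linarith
  have hm4le : graphInt μ (fun x => h x * Real.exp (u x) * (ξ x * ξ x * ξ x * ξ x)) ≤ 0 := by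
    have hsplit : graphInt μ (fun x =>
          (1 / 8) * (graphGamma ω μ ξ ξ x - h x * Real.exp (u x) * ξ x * ξ x)
          - h x * Real.exp (u x) * (ξ x * ξ x * ξ x / 4 + ξ x * ξ x * ξ x * ξ x / 24))
        = (1 / 8) * graphInt μ (fun x =>
            graphGamma ω μ ξ ξ x - h x * Real.exp (u x) * ξ x * ξ x)
          - (1 / 4) * graphInt μ (fun x => h x * Real.exp (u x) * (ξ x * ξ x * ξ x))
          - (1 / 24) * graphInt μ (fun x =>
            h x * Real.exp (u x) * (ξ x * ξ x * ξ x * ξ x)) := by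
      simp only [graphInt, Finset.mul_sum, ← Finset.sum_sub_distrib]
      exact Finset.sum_congr rfl fun x _ => by ring
    rw [hsplit, hQξ, hm3] at ha₄
    linarith
  -- Green-type identity: the ξ³ test function forces the fourth moment up.
  have hgreen : graphInt μ (fun x => graphGamma ω μ ξ (fun z => ξ z * ξ z * ξ z) x
      - h x * Real.exp (u x) * ξ x * (ξ x * ξ x * ξ x)) = 0 := hB (fun z => ξ z * ξ z * ξ z)
  have hsplit2 : graphInt μ (fun x => graphGamma ω μ ξ (fun z => ξ z * ξ z * ξ z) x
        - h x * Real.exp (u x) * ξ x * (ξ x * ξ x * ξ x))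
      = graphInt μ (fun x => graphGamma ω μ ξ (fun z => ξ z * ξ z * ξ z) x)
        - graphInt μ (fun x => h x * Real.exp (u x) * (ξ x * ξ x * ξ x * ξ x)) := by
    simp only [graphInt, ← Finset.sum_sub_distrib]
    exact Finset.sum_congr rfl fun x _ => by ring
  have hgi : graphInt μ (fun x => graphGamma ω μ ξ (fun z => ξ z * ξ z * ξ z) x)
      = (1 / 2) * ∑ x, ∑ y, ω x y * (ξ y - ξ x) * (ξ y * ξ y * ξ y - ξ x * ξ x * ξ x) :=
    lms_gi_gamma ω μ hμ ξ (fun z => ξ z * ξ z * ξ z)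
  have hTle : (∑ x, ∑ y, ω x y * (ξ y - ξ x) * (ξ y * ξ y * ξ y - ξ x * ξ x * ξ x)) ≤ 0 := by
    rw [hsplit2, hgi] at hgreen
    linarith
  have hTterm : ∀ x y : V,
      0 ≤ ω x y * (ξ y - ξ x) * (ξ y * ξ y * ξ y - ξ x * ξ x * ξ x) := by
    intro x y
    rw [mul_assoc]
    exact mul_nonneg (hnonneg x y) (lms_cube_nonneg (ξ x) (ξ y))
  have hT0 : (∑ x, ∑ y, ω x y * (ξ y - ξ x) * (ξ y * ξ y * ξ y - ξ x * ξ x * ξ x)) = 0 :=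
    le_antisymm hTle (Finset.sum_nonneg fun x _ => Finset.sum_nonneg fun y _ => hTterm x y)
  have hterm0 : ∀ x y : V,
      ω x y * (ξ y - ξ x) * (ξ y * ξ y * ξ y - ξ x * ξ x * ξ x) = 0 := by
    intro x y
    have houter := (Finset.sum_eq_zero_iff_of_nonneg
      (fun x _ => Finset.sum_nonneg fun y _ => hTterm x y)).mp hT0 x (Finset.mem_univ x)
    exact (Finset.sum_eq_zero_iff_of_nonneg (fun y _ => hTterm x y)).mp houter y
      (Finset.mem_univ y)
  have hedge : ∀ x y : V, 0 < ω x y → ξ x = ξ y := by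
    intro x y hω
    have h1 := hterm0 x y
    rw [mul_assoc] at h1
    rcases mul_eq_zero.mp h1 with h2 | h2
    · exact absurd h2 hω.ne'
    · exact lms_cube_eq h2
  have hconst : ∀ x y : V, ξ x = ξ y := by
    intro x y
    rcases eq_or_ne x y with rfl | hxy
    · rfl
    obtain ⟨m, p, hp0, hpm, hstep⟩ := hconn x y hxy
    have key : ∀ i : ℕ, i ≤ m → ξ (p i) = ξ (p 0) := by
      intro i
      induction i with
      | zero => intro _; rfl
      | succ n ih =>
        intro hn
        have h1 : n < m := Nat.lt_of_succ_le hn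
        have h2 := hedge (p n) (p (n + 1)) (hstep n h1)
        rw [← h2]
        exact ih (Nat.le_of_lt h1)
    have h3 := key m le_rfl
    rw [hpm, hp0] at h3
    exact h3.symm
  -- ξ is a nonzero constant, and then h must vanish identically: contradiction.
  obtain ⟨x₀, hx₀⟩ := hξ
  obtain ⟨z₀, hz₀⟩ := hne
  have hgam0 : ∀ (η' : V → ℝ) (x : V), graphGamma ω μ ξ η' x = 0 := by
    intro η' x
    simp only [graphGamma]
    rw [Finset.sum_eq_zero, mul_zero]
    intro y _
    rw [hconst y x, sub_self, mul_zero, zero_mul]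
  have hBz : graphInt μ (fun x => graphGamma ω μ ξ (fun y => if y = z₀ then (1 : ℝ) else 0) x
      - h x * Real.exp (u x) * ξ x * (if x = z₀ then (1 : ℝ) else 0)) = 0 :=
    hB (fun y => if y = z₀ then (1 : ℝ) else 0)
  have hval : graphInt μ (fun x => graphGamma ω μ ξ (fun y => if y = z₀ then (1 : ℝ) else 0) x
      - h x * Real.exp (u x) * ξ x * (if x = z₀ then (1 : ℝ) else 0))
      = -(h z₀ * Real.exp (u z₀) * ξ z₀ * μ z₀) := by
    simp only [graphInt]
    rw [Finset.sum_eq_single z₀]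
    · rw [hgam0, if_pos rfl]
      ring
    · intro b _ hb
      rw [hgam0, if_neg hb]
      ring
    · intro hz
      exact absurd (Finset.mem_univ z₀) hz
  rw [hval] at hBz
  have h1 : h z₀ * Real.exp (u z₀) * ξ z₀ * μ z₀ = 0 := by linarith
  have hξz : ξ z₀ ≠ 0 := by
    rw [hconst z₀ x₀]
    exact hx₀
  rcases mul_eq_zero.mp h1 with h2 | h2
  · rcases mul_eq_zero.mp h2 with h3 | h3
    · rcases mul_eq_zero.mp h3 with h4 | h4
      · exact hz₀ h4
      · exact (Real.exp_pos (u z₀)).ne' h4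
    · exact hξz h3
  · exact (hμ z₀).ne' h2
end

section
/- Comparison lemma: Let c < 0, let u : V → ℝ be a non-constant function satisfying −Δu(x) = h(x)e^{u(x)} − c for all x ∈ V, and let ξ : V → ℝ satisfy Δξ(x) + c·ξ(x) = h(x) for all x ∈ V. Then ξ(x) > e^{−u(x)} for every x ∈ V. -/
open Finset Real

private lemma convex_aux (t : ℝ) : 0 ≤ Real.exp t - 1 - t := by
  nlinarith [Real.add_one_le_exp t]

private lemma convex_aux_strict {t : ℝ} (ht : t ≠ 0) : 0 < Real.exp t - 1 - t := by
  nlinarith [Real.add_one_lt_exp ht]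

/-- Comparison lemma: if `c < 0`, `u` is a non-constant solution of `−Δu = h e^u − c`
and `Δξ + c·ξ = h`, then `ξ > e^{−u}` pointwise. -/
theorem comparison_lemma {V : Type*} [Fintype V] [Nonempty V]
    (ω : V → V → ℝ) (μ : V → ℝ)
    (hsymm : ∀ x y, ω x y = ω y x)
    (hnonneg : ∀ x y, 0 ≤ ω x y)
    (hconn : graphConn ω)
    (hμ : ∀ x, 0 < μ x)
    (h : V → ℝ) (c : ℝ) (hc : c < 0)
    (u : V → ℝ) (hu_nonconst : ∃ x y, u x ≠ u y)
    (hu : ∀ x, -graphLap ω μ u x = h x * Real.exp (u x) - c)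
    (ξ : V → ℝ)
    (hξ : ∀ x, graphLap ω μ ξ x + c * ξ x = h x) :
    ∀ x, Real.exp (-u x) < ξ x := by
  classical
  set e : V → ℝ := fun x => Real.exp (-u x) with he
  set g : V → ℝ := fun x => ξ x - e x with hg
  have hu' : ∀ x, ∑ y, ω x y * (u y - u x) = μ x * (c - h x * Real.exp (u x)) := by
    intro x
    have h0 := hu x
    rw [graphLap] at h0
    have hμx : μ x ≠ 0 := (hμ x).ne'
    field_simp at h0
    linarith
  have hξ' : ∀ x, ∑ y, ω x y * (ξ y - ξ x) = μ x * (h x - c * ξ x) := by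
    intro x
    have h0 := hξ x
    rw [graphLap] at h0
    have hμx : μ x ≠ 0 := (hμ x).ne'
    field_simp at h0
    linarith
  -- key identity
  have key : ∀ x, ∑ y, ω x y * (g y - g x)
      = -(∑ y, ω x y * (e y - e x + e x * (u y - u x))) - c * μ x * g x := by
    intro x
    have hee : e x * Real.exp (u x) = 1 := by
      simp only [he, ← Real.exp_add]
      norm_num
    have split1 : ∑ y, ω x y * (e y - e x + e x * (u y - u x))
        = (∑ y, ω x y * (e y - e x)) + e x * ∑ y, ω x y * (u y - u x) := by
      rw [Finset.mul_sum, ← Finset.sum_add_distrib]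
      exact Finset.sum_congr rfl fun y _ => by ring
    have split2 : ∑ y, ω x y * (g y - g x)
        = (∑ y, ω x y * (ξ y - ξ x)) - (∑ y, ω x y * (e y - e x)) := by
      rw [← Finset.sum_sub_distrib]
      exact Finset.sum_congr rfl fun y _ => by simp only [hg]; ring
    rw [split2, split1, hξ' x]
    have h1 := hu' x
    simp only [hg]
    linear_combination (e x) * h1 - (μ x * h x) * hee
  -- termwise nonnegativity of T
  have Tterm : ∀ x y, e y - e x + e x * (u y - u x)
      = e x * (Real.exp (u x - u y) - 1 - (u x - u y)) := by
    intro x y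
    have : e y = e x * Real.exp (u x - u y) := by
      simp only [he, ← Real.exp_add]
      ring_nf
    rw [this]; ring
  have Tnonneg : ∀ x y, 0 ≤ ω x y * (e y - e x + e x * (u y - u x)) := by
    intro x y
    refine mul_nonneg (hnonneg x y) ?_
    rw [Tterm]
    exact mul_nonneg (Real.exp_pos _).le (convex_aux _)
  -- global minimum of g
  obtain ⟨x0, -, hx0⟩ := Finset.exists_min_image (Finset.univ : Finset V) g
    ⟨Classical.arbitrary V, Finset.mem_univ _⟩
  have hx0' : ∀ y, g x0 ≤ g y := fun y => hx0 y (Finset.mem_univ y)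
  -- propagation lemma
  have prop : ∀ x, g x = 0 → g x0 = 0 → ∀ y, 0 < ω x y → g y = 0 ∧ u y = u x := by
    intro x hgx hg0 y hωy
    have hL : 0 ≤ ∑ z, ω x z * (g z - g x) := by
      apply Finset.sum_nonneg
      intro z _
      have := hx0' z
      have := hnonneg x z
      nlinarith
    have hT : 0 ≤ ∑ z, ω x z * (e z - e x + e x * (u z - u x)) :=
      Finset.sum_nonneg fun z _ => Tnonneg x z
    have hk := key x
    have hcz : c * μ x * g x = 0 := by rw [hgx]; ring
    have hL0 : ∑ z, ω x z * (g z - g x) = 0 := by linarith [hk, hcz]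
    have hT0 : ∑ z, ω x z * (e z - e x + e x * (u z - u x)) = 0 := by linarith [hk, hcz]
    have hterm1 : ω x y * (g y - g x) = 0 :=
      (Finset.sum_eq_zero_iff_of_nonneg (fun z _ => by
        have := hx0' z; have := hnonneg x z; nlinarith)).mp hL0 y (Finset.mem_univ y)
    have hterm2 : ω x y * (e y - e x + e x * (u y - u x)) = 0 :=
      (Finset.sum_eq_zero_iff_of_nonneg (fun z _ => Tnonneg x z)).mp hT0 y (Finset.mem_univ y)
    constructor
    · have : g y - g x = 0 := by
        rcases mul_eq_zero.mp hterm1 with h | h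
        · exact absurd h hωy.ne'
        · exact h
      linarith [this, hgx]
    · by_contra hne
      have ht : u x - u y ≠ 0 := fun hh => hne (by linarith [sub_eq_zero.mp hh])
      have : 0 < ω x y * (e y - e x + e x * (u y - u x)) := by
        apply mul_pos hωy
        rw [Tterm]
        exact mul_pos (Real.exp_pos _) (convex_aux_strict ht)
      linarith [hterm2]
  -- g x0 ≥ 0
  have hge : 0 ≤ g x0 := by
    have hL : 0 ≤ ∑ z, ω x0 z * (g z - g x0) := by
      apply Finset.sum_nonneg
      intro z _
      have := hx0' z
      have := hnonneg x0 z
      nlinarith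
    have hT : 0 ≤ ∑ z, ω x0 z * (e z - e x0 + e x0 * (u z - u x0)) :=
      Finset.sum_nonneg fun z _ => Tnonneg x0 z
    have hk := key x0
    nlinarith [hk, hL, hT, mul_pos (neg_pos.mpr hc) (hμ x0)]
  -- g x0 > 0
  have hpos : 0 < g x0 := by
    rcases lt_or_eq_of_le hge with hlt | heq
    · exact hlt
    have hg0 : g x0 = 0 := heq.symm
    exfalso
    have all : ∀ x, g x = 0 ∧ u x = u x0 := by
      intro x
      by_cases hx : x = x0
      · subst hx; exact ⟨hg0, rfl⟩
      · obtain ⟨m, p, hp0, hpm, hp⟩ := hconn x0 x (Ne.symm hx)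
        have step : ∀ i, i ≤ m → g (p i) = 0 ∧ u (p i) = u x0 := by
          intro i
          induction i with
          | zero => intro _; rw [hp0]; exact ⟨hg0, rfl⟩
          | succ n ih =>
            intro hn
            obtain ⟨hgn, hun⟩ := ih (by omega)
            obtain ⟨h1, h2⟩ := prop (p n) hgn hg0 (p (n + 1)) (hp n (by omega))
            exact ⟨h1, h2.trans hun⟩
        rw [← hpm]
        exact step m le_rfl
    obtain ⟨a, b, hab⟩ := hu_nonconst
    exact hab ((all a).2.trans (all b).2.symm)
  intro x
  have := hx0' x
  simp only [hg, he] at this hpos ⊢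
  linarith
end
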